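/- arXiv:2103.09073 — 4 statements merged into one kernel-verified Lean document; each statement's English description precedes it below -/
import Mathlib

section
/- Let P ⊆ R^d be a generalized permutahedron. Then the function χ_d(P)(m) counting the P-generic directions y in the integer cube [m]^d = {1,…,m}^d (i.e., those integer points y of [m]^d for which the y-maximal face P_y is a vertex of P) agrees with a polynomial in m of degree d for all positive integers m, and this polynomial satisfies (-1)^d χ_d(P)(-m) = Σ_{y ∈ [m]^d} #(vertices of P_y). -/
open Set Pointwise
open scoped Classical

noncomputable section

/-- The pairing of a direction `y` with a point `x`: `y(x) = ∑ i, y i * x i`. -/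
def evalDir {I : Type*} [Fintype I] (y x : I → ℝ) : ℝ := ∑ i, y i * x i

/-- A polytope is the convex hull of a nonempty finite set of points. -/
def IsPolytope {I : Type*} [Fintype I] (P : Set (I → ℝ)) : Prop :=
  ∃ V : Finset (I → ℝ), V.Nonempty ∧ P = convexHull ℝ (V : Set (I → ℝ))

/-- The `y`-maximal face of `P`. -/
def maxFace {I : Type*} [Fintype I] (P : Set (I → ℝ)) (y : I → ℝ) : Set (I → ℝ) :=
  {x ∈ P | ∀ x' ∈ P, evalDir y x' ≤ evalDir y x}

/-- The (closed) normal cone of a face `F` of `P`. -/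
def normalCone {I : Type*} [Fintype I] (P F : Set (I → ℝ)) : Set (I → ℝ) :=
  {y | F ⊆ maxFace P y}

/-- The dimension of a set: the dimension of its affine hull. -/
def dimSet {I : Type*} [Fintype I] (S : Set (I → ℝ)) : ℕ :=
  Module.finrank ℝ ↥(vectorSpan ℝ S)

/-- The braid cone associated with the total preorder on `I` induced by a weight
function `w : I → ℕ`: all directions `y` that are monotone with respect to `w`. -/
def braidCone {I : Type*} [Fintype I] (w : I → ℕ) : Set (I → ℝ) :=
  {y | ∀ i j, w i ≤ w j → y i ≤ y j}

/-- The braid fan: the collection of all braid cones, i.e. the faces of the braid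
arrangement of the hyperplanes `{y | y i = y j}`, `i ≠ j`. -/
def braidFan (I : Type*) [Fintype I] : Set (Set (I → ℝ)) :=
  {C | ∃ w : I → ℕ, C = braidCone w}

/-- A generalized permutahedron: a polytope whose normal fan coarsens the braid fan,
i.e. every normal cone of a (nonempty) face is a union of braid cones. -/
def IsGenPerm {I : Type*} [Fintype I] (P : Set (I → ℝ)) : Prop :=
  IsPolytope P ∧ ∀ F : Set (I → ℝ), IsExposed ℝ P F → F.Nonempty →
    ∃ W ⊆ braidFan I, normalCone P F = ⋃₀ W

namespace S5Aux

namespace S5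

def nth {α : Type*} [Inhabited α] {d : ℕ} (z : Fin d → α) (i : ℕ) : α :=
  if h : i < d then z ⟨i, h⟩ else default

lemma nth_lt {α : Type*} [Inhabited α] {d : ℕ} (z : Fin d → α) {i : ℕ} (h : i < d) :
    nth z i = z ⟨i, h⟩ := dif_pos h

lemma nth_fin {α : Type*} [Inhabited α] {d : ℕ} (z : Fin d → α) (i : Fin d) :
    nth z i = z i := by rw [nth_lt z i.isLt]

/-- consecutive ⇒ monotone -/
lemma mono_of_succ {α : Type*} [Inhabited α] [Preorder α] {d : ℕ} {f : Fin d → α}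
    (h : ∀ i : ℕ, i + 1 < d → nth f i ≤ nth f (i+1)) : Monotone f := by
  have key : ∀ n : ℕ, ∀ a : Fin d, ∀ hn : n < d, (a : ℕ) ≤ n → f a ≤ f ⟨n, hn⟩ := by
    intro n
    induction n with
    | zero => intro a hn ha; have : a = ⟨0, hn⟩ := by apply Fin.ext; simp only [Fin.val_mk]; omega
              rw [this]
    | succ k ih =>
        intro a hn ha
        rcases Nat.lt_or_ge (a : ℕ) (k+1) with h1 | h1
        · have hk : k < d := by omega
          refine le_trans (ih a hk (by omega)) ?_
          have := h k hn
          rwa [nth_lt f hk, nth_lt f hn] at this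
        · have : a = ⟨k+1, hn⟩ := by apply Fin.ext; simp only [Fin.val_mk]; omega
          rw [this]
  intro a b hab
  have := key (b : ℕ) a b.isLt hab
  simpa using this

/-- consecutive strict ⇒ strictMono -/
lemma strictMono_of_succ {α : Type*} [Inhabited α] [Preorder α] {d : ℕ} {f : Fin d → α}
    (h : ∀ i : ℕ, i + 1 < d → nth f i < nth f (i+1)) : StrictMono f := by
  have key : ∀ n : ℕ, ∀ a : Fin d, ∀ hn : n < d, (a : ℕ) < n → f a < f ⟨n, hn⟩ := by
    intro n
    induction n with
    | zero => omega
    | succ k ih =>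
        intro a hn ha
        have hk : k < d := by omega
        have hlt : f ⟨k, hk⟩ < f ⟨k+1, hn⟩ := by
          have := h k hn; rwa [nth_lt f hk, nth_lt f hn] at this
        rcases Nat.lt_or_ge (a : ℕ) k with h1 | h1
        · exact lt_trans (ih a hk h1) hlt
        · have : a = ⟨k, hk⟩ := by apply Fin.ext; simp only [Fin.val_mk]; omega
          rw [this]; exact hlt
  intro a b hab
  have := key (b : ℕ) a b.isLt hab
  simpa using this



def cnt (T : Finset ℕ) (t : ℕ) : ℕ := ((Finset.range t).filter (fun j => j ∉ T)).card

lemma cnt_succ (T : Finset ℕ) (t : ℕ) :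
    cnt T (t+1) = cnt T t + (if t ∈ T then 0 else 1) := by
  unfold cnt
  rw [Finset.range_add_one, Finset.filter_insert]
  by_cases h : t ∈ T
  · simp [h]
  · simp only [h, not_false_iff, if_true]
    rw [Finset.card_insert_of_notMem (by simp)]
    simp [h]

lemma cnt_mono (T : Finset ℕ) : Monotone (cnt T) := by
  intro a b hab
  exact Finset.card_le_card (Finset.filter_subset_filter _ (by simpa using hab))

lemma cnt_le (T : Finset ℕ) (t : ℕ) : cnt T t ≤ t := by
  calc cnt T t ≤ (Finset.range t).card := Finset.card_le_card (Finset.filter_subset _ _)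
  _ = t := Finset.card_range t

lemma cnt_top {e : ℕ} {T : Finset ℕ} (hT : T ⊆ Finset.range e) :
    cnt T e = e - T.card := by
  unfold cnt
  have : (Finset.range e).filter (fun j => j ∉ T) = Finset.range e \ T := by
    ext j; simp [Finset.mem_sdiff]
  rw [this, Finset.card_sdiff_of_subset hT, Finset.card_range]

def HOfin (d m : ℕ) (σ : Equiv.Perm (Fin d)) (T : Finset ℕ) : Finset (Fin d → ℕ) :=
  (Fintype.piFinset fun _ : Fin d => Finset.Icc 1 m).filter
    (fun y => (∀ i : ℕ, i + 1 < d → nth (fun a => y (σ a)) i ≤ nth (fun a => y (σ a)) (i+1)) ∧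
              (∀ i ∈ T, ∀ _ : i + 1 < d, nth (fun a => y (σ a)) i < nth (fun a => y (σ a)) (i+1)))

lemma mem_HOfin {d m : ℕ} {σ : Equiv.Perm (Fin d)} {T : Finset ℕ} {y : Fin d → ℕ} :
    y ∈ HOfin d m σ T ↔ (∀ i, y i ∈ Finset.Icc 1 m) ∧
      (∀ i : ℕ, i + 1 < d → nth (fun a => y (σ a)) i ≤ nth (fun a => y (σ a)) (i+1)) ∧
      (∀ i ∈ T, ∀ _ : i + 1 < d, nth (fun a => y (σ a)) i < nth (fun a => y (σ a)) (i+1)) := by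
  unfold HOfin
  rw [Finset.mem_filter, Fintype.mem_piFinset]

lemma strictMono_nat_ge {d : ℕ} {z : Fin d → ℕ} (hz : StrictMono z) :
    ∀ i, ∀ h : i < d, ∀ h0 : 0 < d, z ⟨0, h0⟩ + i ≤ z ⟨i, h⟩ := by
  intro i
  induction i with
  | zero => intro h h0; simp
  | succ k ih =>
      intro h h0
      have hk : k < d := by omega
      have h1 : z ⟨k, hk⟩ < z ⟨k+1, h⟩ := hz (by simp [Fin.lt_def])
      have := ih hk h0
      omega

theorem card_HOfin_one (d m : ℕ) (T : Finset ℕ) (hT : T ⊆ Finset.range (d-1)) :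
    (HOfin d m 1 T).card = (m + ((d-1) - T.card)).choose d := by
  classical
  set M := m + ((d-1) - T.card) with hM
  have hcard : ∀ y ∈ HOfin d m 1 T, StrictMono (fun t : Fin d => y t + cnt T t) := by
    intro y hy
    rw [mem_HOfin] at hy
    obtain ⟨hcube, hmono, hstrict⟩ := hy
    apply strictMono_of_succ
    intro i hi
    rw [nth_lt _ (by omega : i < d), nth_lt _ hi]
    simp only
    have hc := cnt_succ T i
    by_cases hiT : i ∈ T
    · have := hstrict i hiT hi
      rw [nth_lt _ (by omega : i < d), nth_lt _ hi] at this
      simp only [Equiv.Perm.coe_one, id_eq] at this ⊢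
      have hcm := cnt_mono T (Nat.le_succ i)
      omega
    · have := hmono i hi
      rw [nth_lt _ (by omega : i < d), nth_lt _ hi] at this
      simp only [Equiv.Perm.coe_one, id_eq] at this ⊢
      simp [hiT] at hc
      omega
  have hpc : ((Finset.Icc 1 M).powersetCard d).card = M.choose d := by
    rw [Finset.card_powersetCard, Nat.card_Icc]
    norm_num
  rw [← hpc]
  apply Finset.card_bij (fun y _ => Finset.image (fun t : Fin d => y t + cnt T t) Finset.univ)
  · -- membership
    intro y hy
    have hsm := hcard y hy
    rw [mem_HOfin] at hy
    obtain ⟨hcube, hmono, hstrict⟩ := hy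
    rw [Finset.mem_powersetCard]
    constructor
    · intro s hs
      rw [Finset.mem_image] at hs
      obtain ⟨t, _, rfl⟩ := hs
      have h1 := hcube t
      rw [Finset.mem_Icc] at h1 ⊢
      have h2 : cnt T (t : ℕ) ≤ (d-1) - T.card := by
        have := cnt_mono T (by omega : (t : ℕ) ≤ d - 1)
        rw [cnt_top hT] at this
        exact this
      omega
    · rw [Finset.card_image_of_injOn (hsm.injective.injOn), Finset.card_univ,
        Fintype.card_fin]
  · -- injective
    intro y hy y' hy' heq
    have h1 := hcard y hy
    have h2 := hcard y' hy'
    haveI : WellFoundedLT (Fin d) := Finite.to_wellFoundedLT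
    have : (fun t : Fin d => y t + cnt T t) = fun t : Fin d => y' t + cnt T t := by
      apply (h1.range_inj h2).1
      rw [← Set.image_univ, ← Set.image_univ, ← Finset.coe_univ, ← Finset.coe_image,
        ← Finset.coe_image, heq]
    funext t
    have := congrFun this t
    omega
  · -- surjective
    intro S hS
    rw [Finset.mem_powersetCard] at hS
    obtain ⟨hSsub, hScard⟩ := hS
    set z : Fin d → ℕ := fun t => (S.orderIsoOfFin hScard t : ℕ) with hz
    have hzS : ∀ t, z t ∈ S := fun t => (S.orderIsoOfFin hScard t).2
    have hzsm : StrictMono z := by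
      intro a b hab
      exact Subtype.coe_lt_coe.mpr ((S.orderIsoOfFin hScard).strictMono hab)
    have hzIcc : ∀ t, 1 ≤ z t ∧ z t ≤ M := by
      intro t
      have := hSsub (hzS t)
      rw [Finset.mem_Icc] at this; exact this
    have F1 : ∀ t : Fin d, cnt T (t : ℕ) + 1 ≤ z t := by
      intro t
      have h0 : 0 < d := t.pos
      have := strictMono_nat_ge hzsm (t : ℕ) t.isLt h0
      have h1 := (hzIcc ⟨0, h0⟩).1
      have h2 := cnt_le T (t : ℕ)
      calc cnt T (t : ℕ) + 1 ≤ (t : ℕ) + 1 := by omega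
        _ ≤ z ⟨0, h0⟩ + (t : ℕ) := by omega
        _ ≤ z t := by simpa using this
    have F2 : ∀ j, ∀ i, ∀ h : i < d, i + j = d - 1 → z ⟨i, h⟩ ≤ m + cnt T i := by
      intro j
      induction j with
      | zero =>
          intro i h hij
          have : cnt T i = (d-1) - T.card := by
            rw [show i = d - 1 by omega]; exact cnt_top hT
          have := (hzIcc ⟨i, h⟩).2
          omega
      | succ k ih =>
          intro i h hij
          have h1 : i + 1 < d := by omega
          have ha := ih (i+1) h1 (by omega)
          have hb : z ⟨i, h⟩ < z ⟨i+1, h1⟩ := hzsm (by simp [Fin.lt_def])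
          have hc := cnt_succ T i
          by_cases hiT : i ∈ T <;> simp [hiT] at hc <;> omega
    refine ⟨fun t => z t - cnt T (t : ℕ), ?_, ?_⟩
    · rw [mem_HOfin]
      refine ⟨?_, ?_, ?_⟩
      · intro t
        rw [Finset.mem_Icc]
        have hf1 := F1 t
        have hf2 := F2 ((d-1) - (t:ℕ)) (t : ℕ) t.isLt (by have := t.isLt; omega)
        simp only [Fin.eta] at hf2
        omega
      · intro i hi
        rw [nth_lt _ (by omega : i < d), nth_lt _ hi]
        simp only [Equiv.Perm.coe_one, id_eq]
        have hb : z ⟨i, by omega⟩ < z ⟨i+1, hi⟩ := hzsm (by simp [Fin.lt_def])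
        have hc := cnt_succ T i
        have hf1 := F1 ⟨i, by omega⟩
        have hf1' := F1 ⟨i+1, hi⟩
        simp only [Fin.val_mk] at hf1 hf1'
        by_cases hiT : i ∈ T <;> simp [hiT] at hc <;> omega
      · intro i hiT hi
        rw [nth_lt _ (by omega : i < d), nth_lt _ hi]
        simp only [Equiv.Perm.coe_one, id_eq]
        have hb : z ⟨i, by omega⟩ < z ⟨i+1, hi⟩ := hzsm (by simp [Fin.lt_def])
        have hc := cnt_succ T i
        have hf1 := F1 ⟨i, by omega⟩
        have hf1' := F1 ⟨i+1, hi⟩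
        simp only [Fin.val_mk] at hf1 hf1'
        simp [hiT] at hc
        omega
    · -- image equals S
      have key : ∀ t : Fin d, (z t - cnt T (t : ℕ)) + cnt T (t : ℕ) = z t := by
        intro t; have := F1 t; omega
      have himg : Finset.image (fun t : Fin d => (z t - cnt T (t:ℕ)) + cnt T (t:ℕ)) Finset.univ
          = Finset.image z Finset.univ := by
        apply Finset.image_congr
        intro t _; exact key t
      rw [himg]
      ext s
      rw [Finset.mem_image]
      constructor
      · rintro ⟨t, _, rfl⟩; exact hzS t
      · intro hs
        refine ⟨(S.orderIsoOfFin hScard).symm ⟨s, hs⟩, Finset.mem_univ _, ?_⟩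
        show ((S.orderIsoOfFin hScard) ((S.orderIsoOfFin hScard).symm ⟨s, hs⟩) : ℕ) = s
        rw [OrderIso.apply_symm_apply]

theorem card_HOfin (d m : ℕ) (σ : Equiv.Perm (Fin d)) (T : Finset ℕ)
    (hT : T ⊆ Finset.range (d-1)) :
    (HOfin d m σ T).card = (m + ((d-1) - T.card)).choose d := by
  classical
  rw [← card_HOfin_one d m T hT]
  apply Finset.card_bij (fun y _ => y ∘ σ)
  · intro y hy
    rw [mem_HOfin] at hy ⊢
    obtain ⟨h1, h2, h3⟩ := hy
    exact ⟨fun i => h1 _, by simpa using h2, by simpa using h3⟩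
  · intro y hy y' hy' heq
    funext i
    have := congrFun heq (σ.symm i)
    simpa using this
  · intro y hy
    refine ⟨y ∘ σ.symm, ?_, by funext i; simp⟩
    rw [mem_HOfin] at hy ⊢
    obtain ⟨h1, h2, h3⟩ := hy
    refine ⟨fun i => h1 _, ?_, ?_⟩
    · intro i hi
      have := h2 i hi
      simpa using this
    · intro i hiT hi
      have := h3 i hiT hi
      simpa using this

end S5

namespace S5

/-- finitely many conditions of the form `0 < A + t B` hold for some small positive `t`. -/
lemma exists_small {ι : Type*} (s : Finset ι) (A B : ι → ℝ)
    (h : ∀ k ∈ s, 0 < A k ∨ (A k = 0 ∧ 0 < B k)) :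
    ∃ t : ℝ, 0 < t ∧ ∀ k ∈ s, 0 < A k + t * B k := by
  have hev : ∀ᶠ t in nhdsWithin (0:ℝ) (Set.Ioi 0), ∀ k ∈ s, 0 < A k + t * B k := by
    rw [Filter.eventually_all_finset]
    intro k hk
    rcases h k hk with h1 | ⟨h1, h2⟩
    · have hc : Filter.Tendsto (fun t : ℝ => A k + t * B k)
          (nhdsWithin (0:ℝ) (Set.Ioi 0)) (nhds (A k + 0 * B k)) := by
        apply Filter.Tendsto.mono_left _ nhdsWithin_le_nhds
        exact (Continuous.tendsto (by continuity) 0)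
      have : (0:ℝ) < A k + 0 * B k := by simpa using h1
      exact hc.eventually_const_lt this
    · have : ∀ᶠ t in nhdsWithin (0:ℝ) (Set.Ioi 0), t ∈ Set.Ioi (0:ℝ) :=
        eventually_mem_nhdsWithin
      refine this.mono fun t ht => ?_
      rw [h1, zero_add]
      exact mul_pos ht h2
  have hpos : ∀ᶠ t in nhdsWithin (0:ℝ) (Set.Ioi 0), (0:ℝ) < t := eventually_mem_nhdsWithin
  obtain ⟨t, ht1, ht2⟩ := (hpos.and hev).exists
  exact ⟨t, ht1, ht2⟩

/-- real product formula for descending factorial -/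
lemma prod_cast_desc (n e : ℕ) :
    ∏ t ∈ Finset.range e, ((n:ℝ) - t) = (n.descFactorial e : ℝ) := by
  induction e with
  | zero => simp
  | succ k ih =>
      rw [Finset.prod_range_succ, ih, Nat.descFactorial_succ]
      rcases Nat.lt_or_ge n k with h | h
      · have h1 : n.descFactorial k = 0 := Nat.descFactorial_eq_zero_iff_lt.mpr h
        have h2 : n - k = 0 := by omega
        simp [h1, h2]
      · rw [Nat.cast_mul, Nat.cast_sub h]
        ring

/-- sorting: any injective tuple is strictly sorted by some permutation -/
lemma sort_exists {d : ℕ} {z : Fin d → ℝ} (hz : Function.Injective z) :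
    ∃ σ : Equiv.Perm (Fin d), StrictMono (z ∘ σ) := by
  refine ⟨Tuple.sort z, ?_⟩
  exact (Tuple.monotone_sort z).strictMono_of_injective (hz.comp (Equiv.injective _))

lemma sort_unique {d : ℕ} {z : Fin d → ℝ} (hz : Function.Injective z)
    {σ σ' : Equiv.Perm (Fin d)} (h1 : StrictMono (z ∘ σ)) (h2 : StrictMono (z ∘ σ')) :
    σ = σ' := by
  haveI : WellFoundedLT (Fin d) := Finite.to_wellFoundedLT
  have hr : Set.range (z ∘ σ) = Set.range (z ∘ σ') := by
    rw [Set.range_comp, Set.range_comp, Equiv.range_eq_univ, Equiv.range_eq_univ]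
  have := (h1.range_inj h2).1 hr
  apply Equiv.ext
  intro a
  exact hz (congrFun this a)

end S5

namespace S5

variable {d : ℕ}

lemma evalDir_isLinear (y : Fin d → ℝ) : IsLinearMap ℝ (fun x => evalDir y x) := by
  constructor
  · intro a b
    unfold evalDir
    rw [← Finset.sum_add_distrib]
    exact Finset.sum_congr rfl fun i _ => by simp [Pi.add_apply]; ring
  · intro c a
    unfold evalDir
    rw [smul_eq_mul, Finset.mul_sum]
    exact Finset.sum_congr rfl fun i _ => by simp [Pi.smul_apply, smul_eq_mul]; ring

lemma evalDir_comb (a b : ℝ) (y z x : Fin d → ℝ) :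
    evalDir (fun i => a * y i + b * z i) x = a * evalDir y x + b * evalDir z x := by
  unfold evalDir
  rw [Finset.mul_sum, Finset.mul_sum, ← Finset.sum_add_distrib]
  exact Finset.sum_congr rfl fun i _ => by ring

lemma evalDir_sub_comb (a b : ℝ) (y z : Fin d → ℝ) (u v : Fin d → ℝ) :
    evalDir (fun i => a * y i + b * z i) u - evalDir (fun i => a * y i + b * z i) v
      = a * (evalDir y u - evalDir y v) + b * (evalDir z u - evalDir z v) := by
  rw [evalDir_comb, evalDir_comb]; ring

lemma evalDir_le_hull {V : Finset (Fin d → ℝ)} {y x : Fin d → ℝ} {c : ℝ}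
    (hx : x ∈ convexHull ℝ (V : Set (Fin d → ℝ))) (h : ∀ v ∈ V, evalDir y v ≤ c) :
    evalDir y x ≤ c := by
  have hsub : convexHull ℝ (V : Set (Fin d → ℝ)) ⊆ {x | evalDir y x ≤ c} := by
    apply convexHull_min
    · intro v hv; exact h v hv
    · exact convex_halfSpace_le (evalDir_isLinear y) c
  exact hsub hx

lemma support_lemma {V : Finset (Fin d → ℝ)} {y x : Fin d → ℝ} {c : ℝ}
    (hx : x ∈ convexHull ℝ (V : Set (Fin d → ℝ))) (h : ∀ v ∈ V, evalDir y v ≤ c)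
    (he : evalDir y x = c) :
    x ∈ convexHull ℝ ((V.filter (fun v => evalDir y v = c) : Finset (Fin d → ℝ)) :
      Set (Fin d → ℝ)) := by
  rw [Finset.convexHull_eq] at hx
  obtain ⟨w, hw0, hw1, hwx⟩ := hx
  have hsum : evalDir y x = ∑ v ∈ V, w v * evalDir y v := by
    rw [← hwx, Finset.centerMass_eq_of_sum_1 _ _ hw1]
    have hL := evalDir_isLinear y
    let L := IsLinearMap.mk' _ hL
    have : evalDir y (∑ v ∈ V, w v • id v) = L (∑ v ∈ V, w v • id v) := rfl
    rw [this, map_sum]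
    refine Finset.sum_congr rfl fun v _ => ?_
    rw [map_smul]
    simp only [smul_eq_mul, id_eq]
    congr 1
  have hzero : ∑ v ∈ V, w v * (c - evalDir y v) = 0 := by
    have : ∑ v ∈ V, w v * (c - evalDir y v)
        = c * (∑ v ∈ V, w v) - ∑ v ∈ V, w v * evalDir y v := by
      rw [Finset.mul_sum, ← Finset.sum_sub_distrib]
      exact Finset.sum_congr rfl fun v _ => by ring
    rw [this, hw1, ← hsum, he]; ring
  have hterm : ∀ v ∈ V, w v ≠ 0 → evalDir y v = c := by
    intro v hv hwv
    have hnn : ∀ v ∈ V, 0 ≤ w v * (c - evalDir y v) :=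
      fun v hv => mul_nonneg (hw0 v hv) (by linarith [h v hv])
    have := (Finset.sum_eq_zero_iff_of_nonneg hnn).1 hzero v hv
    have hc : c - evalDir y v = 0 := by
      rcases mul_eq_zero.1 this with h' | h'
      · exact absurd h' hwv
      · exact h'
    linarith
  rw [← hwx, ← Finset.centerMass_filter_ne_zero]
  apply Finset.centerMass_mem_convexHull
  · intro v hv; exact hw0 v (Finset.mem_filter.1 hv).1
  · rw [Finset.sum_filter_ne_zero, hw1]; norm_num
  · intro v hv
    rw [Finset.mem_filter] at hv
    simp only [id_eq, Finset.coe_filter]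
    exact Set.mem_setOf.2 ⟨hv.1, hterm v hv.1 hv.2⟩

end S5

namespace S5M

variable {d : ℕ} {P : Set (Fin d → ℝ)} {V : Finset (Fin d → ℝ)}

open S5

lemma V_sub_P (hV : P = convexHull ℝ (V : Set (Fin d → ℝ))) : (V : Set (Fin d → ℝ)) ⊆ P := by
  rw [hV]; exact subset_convexHull ℝ _

lemma maxFace_singleton_of (hV : P = convexHull ℝ (V : Set (Fin d → ℝ)))
    {y v : Fin d → ℝ} (hv : v ∈ P)
    (hstrict : ∀ x ∈ V, x ≠ v → evalDir y x < evalDir y v) :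
    maxFace P y = {v} := by
  have hle : ∀ x ∈ V, evalDir y x ≤ evalDir y v := by
    intro x hx
    by_cases hxv : x = v
    · rw [hxv]
    · exact le_of_lt (hstrict x hx hxv)
  have hPle : ∀ p ∈ P, evalDir y p ≤ evalDir y v := by
    intro p hp
    rw [hV] at hp
    exact evalDir_le_hull hp hle
  ext p
  simp only [Set.mem_singleton_iff]
  constructor
  · rintro ⟨hpP, hpmax⟩
    have h1 : evalDir y p = evalDir y v :=
      le_antisymm (hPle p hpP) (hpmax v hv)
    have h2 : p ∈ convexHull ℝ ((V.filter (fun x => evalDir y x = evalDir y v) :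
        Finset (Fin d → ℝ)) : Set (Fin d → ℝ)) := by
      apply support_lemma (hV ▸ hpP) hle h1
    have h3 : ((V.filter (fun x => evalDir y x = evalDir y v) : Finset (Fin d → ℝ)) :
        Set (Fin d → ℝ)) ⊆ {v} := by
      intro x hx
      simp only [Finset.coe_filter, Set.mem_setOf] at hx
      by_contra hxv
      exact absurd hx.2 (ne_of_lt (hstrict x hx.1 hxv))
    have := convexHull_mono h3 h2
    rwa [convexHull_singleton] at this
  · rintro rfl
    exact ⟨hv, hPle⟩

lemma singleMax_of_maxFace (hV : P = convexHull ℝ (V : Set (Fin d → ℝ)))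
    {y v : Fin d → ℝ} (h : maxFace P y = {v}) :
    v ∈ P ∧ ∀ x ∈ V, x ≠ v → evalDir y x < evalDir y v := by
  have hv : v ∈ maxFace P y := by rw [h]; rfl
  obtain ⟨hvP, hvmax⟩ := hv
  refine ⟨hvP, ?_⟩
  intro x hx hxv
  have hxP : x ∈ P := V_sub_P hV hx
  have hle : evalDir y x ≤ evalDir y v := hvmax x hxP
  rcases lt_or_eq_of_le hle with h' | h'
  · exact h'
  · exfalso
    have : x ∈ maxFace P y := ⟨hxP, fun p hp => h' ▸ hvmax p hp⟩
    rw [h] at this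
    exact hxv this

lemma maxFace_nonempty (hV : P = convexHull ℝ (V : Set (Fin d → ℝ))) (hVne : V.Nonempty)
    (y : Fin d → ℝ) : ∃ v ∈ V, v ∈ maxFace P y := by
  obtain ⟨v, hvV, hvmax⟩ := Finset.exists_max_image V (evalDir y) hVne
  refine ⟨v, hvV, V_sub_P hV hvV, ?_⟩
  intro p hp
  rw [hV] at hp
  exact evalDir_le_hull hp hvmax

lemma isExposed_maxFace (y : Fin d → ℝ) : IsExposed ℝ P (maxFace P y) := by
  intro _
  refine ⟨LinearMap.toContinuousLinearMap (IsLinearMap.mk' _ (evalDir_isLinear y)), ?_⟩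
  rfl

lemma maxFace_subset (y : Fin d → ℝ) : maxFace P y ⊆ P := fun x hx => hx.1

/-- Step A: injective directions give vertices. -/
lemma stepA (hgp : IsGenPerm P) (hV : P = convexHull ℝ (V : Set (Fin d → ℝ)))
    (hVne : V.Nonempty) {y : Fin d → ℝ} (hy : Function.Injective y) :
    ∃ v, maxFace P y = {v} := by
  obtain ⟨v₀, hv₀V, hv₀⟩ := maxFace_nonempty hV hVne y
  obtain ⟨W, hWfan, hWeq⟩ := hgp.2 (maxFace P y) (isExposed_maxFace y) ⟨v₀, hv₀⟩
  have hyW : y ∈ ⋃₀ W := by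
    rw [← hWeq]; exact fun x hx => hx
  obtain ⟨C, hCW, hyC⟩ := hyW
  obtain ⟨w, rfl⟩ := hWfan hCW
  -- all elements of maxFace coincide
  have key : ∀ u₁ ∈ maxFace P y, ∀ u₂ ∈ maxFace P y, u₁ = u₂ := by
    intro u₁ hu₁ u₂ hu₂
    by_contra hne
    obtain ⟨i₀, hi₀⟩ : ∃ i₀, u₁ i₀ ≠ u₂ i₀ := by
      by_contra hc
      push_neg at hc
      exact hne (funext hc)
    -- find small ε
    obtain ⟨ε, hε, hεsmall⟩ : ∃ ε : ℝ, 0 < ε ∧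
        ∀ i j : Fin d, y i < y j → y i + ε ≤ y j := by
      rcases Finset.eq_empty_or_nonempty
        ((Finset.univ : Finset (Fin d × Fin d)).filter (fun p => y p.1 < y p.2)) with he | hne'
      · refine ⟨1, one_pos, ?_⟩
        intro i j hij
        exfalso
        have : (i, j) ∈ (Finset.univ : Finset (Fin d × Fin d)).filter
            (fun p => y p.1 < y p.2) := by
          simp [hij]
        rw [he] at this
        exact absurd this (Finset.notMem_empty _)
      · set s := (Finset.univ : Finset (Fin d × Fin d)).filter (fun p => y p.1 < y p.2)
        refine ⟨s.inf' hne' (fun p => y p.2 - y p.1), ?_, ?_⟩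
        · rw [Finset.lt_inf'_iff]
          intro p hp
          rw [Finset.mem_filter] at hp
          linarith [hp.2]
        · intro i j hij
          have : (i, j) ∈ s := by simp [s, hij]
          have := Finset.inf'_le (fun p => y p.2 - y p.1) this
          simp only at this
          linarith
    -- perturbed direction
    set y' : Fin d → ℝ := fun i => y i + (if i = i₀ then ε else 0) with hy'
    have hy'C : y' ∈ braidCone w := by
      intro i j hij
      have h1 : y i ≤ y j := hyC i j hij
      by_cases hije : i = j
      · rw [hije]
      · have hlt : y i < y j := lt_of_le_of_ne h1 (fun h => hije (hy h))
        have := hεsmall i j hlt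
        simp only [hy']
        split_ifs <;> [skip; skip; skip; skip] <;> simp <;> linarith
    have hy'N : y' ∈ normalCone P (maxFace P y) := by
      rw [hWeq]
      exact ⟨braidCone w, hCW, hy'C⟩
    have h1 : u₁ ∈ maxFace P y' := hy'N hu₁
    have h2 : u₂ ∈ maxFace P y' := hy'N hu₂
    have e1 : evalDir y' u₁ = evalDir y' u₂ :=
      le_antisymm (h2.2 u₁ h1.1) (h1.2 u₂ h2.1)
    have e0 : evalDir y u₁ = evalDir y u₂ :=
      le_antisymm (hu₂.2 u₁ hu₁.1) (hu₁.2 u₂ hu₂.1)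
    -- evalDir y' x = evalDir y x + ε * x i₀
    have hsplit : ∀ x : Fin d → ℝ, evalDir y' x = evalDir y x + ε * x i₀ := by
      intro x
      unfold evalDir
      have hterm : ∀ i : Fin d, y' i * x i = y i * x i + (if i = i₀ then ε * x i₀ else 0) := by
        intro i
        simp only [hy']
        split_ifs with h
        · subst h; ring
        · ring
      rw [Finset.sum_congr rfl (fun i _ => hterm i), Finset.sum_add_distrib,
        Finset.sum_ite_eq' Finset.univ i₀ (fun _ => ε * x i₀)]
      simp
    rw [hsplit, hsplit] at e1
    rw [e0] at e1
    have : ε * u₁ i₀ = ε * u₂ i₀ := by linarith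
    exact hi₀ (mul_left_cancel₀ (ne_of_gt hε) this)
  obtain ⟨v₀', hv₀'⟩ := maxFace_nonempty hV hVne y
  exact ⟨v₀, Set.eq_singleton_iff_unique_mem.2 ⟨hv₀, fun x hx => key x hx v₀ hv₀⟩⟩

end S5M

namespace S5M
open S5

lemma evalDir_neg {d : ℕ} (y x : Fin d → ℝ) :
    evalDir (fun i => -(y i)) x = - evalDir y x := by
  unfold evalDir
  rw [← Finset.sum_neg_distrib]
  exact Finset.sum_congr rfl fun i _ => by ring

lemma evalDir_x_comb {d : ℕ} (y : Fin d → ℝ) (a b : ℝ) (x₁ x₂ : Fin d → ℝ) :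
    evalDir y (a • x₁ + b • x₂) = a * evalDir y x₁ + b * evalDir y x₂ := by
  unfold evalDir
  rw [Finset.mul_sum, Finset.mul_sum, ← Finset.sum_add_distrib]
  refine Finset.sum_congr rfl fun i _ => ?_
  simp only [Pi.add_apply, Pi.smul_apply, smul_eq_mul]
  ring

variable {d : ℕ} {P : Set (Fin d → ℝ)} {V : Finset (Fin d → ℝ)}

/-- Step B' : the key fan lemma. -/
lemma stepB' (hgp : IsGenPerm P) {y₀ y v : Fin d → ℝ}
    (h0 : maxFace P y₀ = {v}) (hmono : ∀ i j, y₀ i ≤ y₀ j → y i ≤ y j) :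
    v ∈ maxFace P y := by
  have hexp : IsExposed ℝ P {v} := by rw [← h0]; exact isExposed_maxFace y₀
  obtain ⟨W, hWfan, hWeq⟩ := hgp.2 {v} hexp ⟨v, rfl⟩
  have hy₀ : y₀ ∈ normalCone P {v} := by
    intro x hx
    rw [Set.mem_singleton_iff] at hx
    subst hx
    rw [h0]; rfl
  rw [hWeq] at hy₀
  obtain ⟨C, hCW, hy₀C⟩ := hy₀
  obtain ⟨w, rfl⟩ := hWfan hCW
  have hyC : y ∈ braidCone w := fun i j hij => hmono i j (hy₀C i j hij)
  have hyN : y ∈ normalCone P {v} := by rw [hWeq]; exact ⟨_, hCW, hyC⟩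
  exact hyN rfl

lemma extreme_of_singleton (hV : P = convexHull ℝ (V : Set (Fin d → ℝ)))
    {y₀ v : Fin d → ℝ} (h0 : maxFace P y₀ = {v}) : v ∈ Set.extremePoints ℝ P := by
  rw [mem_extremePoints]
  have hvP : v ∈ P := (singleMax_of_maxFace hV h0).1
  have hv' : v ∈ maxFace P y₀ := by rw [h0]; rfl
  have hmax : ∀ p ∈ P, evalDir y₀ p ≤ evalDir y₀ v := hv'.2
  refine ⟨hvP, ?_⟩
  intro x₁ hx₁ x₂ hx₂ hseg
  obtain ⟨a, b, ha, hb, hab, hsum⟩ := hseg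
  have hfe : evalDir y₀ v = a * evalDir y₀ x₁ + b * evalDir y₀ x₂ := by
    rw [← hsum, evalDir_x_comb]
  have h1 : evalDir y₀ x₁ = evalDir y₀ v := by
    by_contra hne
    have hlt : evalDir y₀ x₁ < evalDir y₀ v := lt_of_le_of_ne (hmax x₁ hx₁) hne
    have h2 : evalDir y₀ x₂ ≤ evalDir y₀ v := hmax x₂ hx₂
    have e1 := mul_lt_mul_of_pos_left hlt ha
    have e2 := mul_le_mul_of_nonneg_left h2 hb.le
    have e3 : a * evalDir y₀ v + b * evalDir y₀ v = evalDir y₀ v := by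
      rw [← add_mul, hab, one_mul]
    linarith
  have h2 : evalDir y₀ x₂ = evalDir y₀ v := by
    by_contra hne
    have hlt : evalDir y₀ x₂ < evalDir y₀ v := lt_of_le_of_ne (hmax x₂ hx₂) hne
    have h1' : evalDir y₀ x₁ ≤ evalDir y₀ v := hmax x₁ hx₁
    have e1 := mul_lt_mul_of_pos_left hlt hb
    have e2 := mul_le_mul_of_nonneg_left h1' ha.le
    have e3 : a * evalDir y₀ v + b * evalDir y₀ v = evalDir y₀ v := by
      rw [← add_mul, hab, one_mul]
    linarith
  constructor
  · have : x₁ ∈ maxFace P y₀ := ⟨hx₁, fun p hp => h1 ▸ hmax p hp⟩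
    rw [h0] at this; exact this
  · have : x₂ ∈ maxFace P y₀ := ⟨hx₂, fun p hp => h2 ▸ hmax p hp⟩
    rw [h0] at this; exact this

lemma extreme_in_subset {F : Set (Fin d → ℝ)} {v : Fin d → ℝ}
    (hv : v ∈ Set.extremePoints ℝ P) (hvF : v ∈ F) (hFP : F ⊆ P) :
    v ∈ Set.extremePoints ℝ F := by
  rw [mem_extremePoints] at hv ⊢
  exact ⟨hvF, fun x₁ h₁ x₂ h₂ hseg => hv.2 x₁ (hFP h₁) x₂ (hFP h₂) hseg⟩

lemma clm_eq_evalDir (f : (Fin d → ℝ) →L[ℝ] ℝ) (x : Fin d → ℝ) :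
    f x = evalDir (fun i => f (fun j => if i = j then 1 else 0)) x := by
  conv_lhs => rw [pi_eq_sum_univ x]
  rw [map_sum]
  unfold evalDir
  refine Finset.sum_congr rfl fun i _ => ?_
  rw [map_smul, smul_eq_mul]
  ring

/-- The maximal face is the hull of the maximizing vertices. -/
lemma maxFace_eq_hull (hV : P = convexHull ℝ (V : Set (Fin d → ℝ))) (hVne : V.Nonempty)
    (y : Fin d → ℝ) :
    ∃ c : ℝ, (∀ x ∈ V, evalDir y x ≤ c) ∧ (∀ p ∈ maxFace P y, evalDir y p = c) ∧
      maxFace P y = convexHull ℝ ((V.filter (fun x => evalDir y x = c) : Finset (Fin d → ℝ)) :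
        Set (Fin d → ℝ)) := by
  obtain ⟨v₀, hv₀V, hv₀⟩ := maxFace_nonempty hV hVne y
  refine ⟨evalDir y v₀, fun x hx => hv₀.2 x (V_sub_P hV hx), ?_, ?_⟩
  · intro p hp
    exact le_antisymm (hv₀.2 p hp.1) (hp.2 v₀ hv₀.1)
  · ext p
    constructor
    · intro hp
      have h1 : evalDir y p = evalDir y v₀ := le_antisymm (hv₀.2 p hp.1) (hp.2 v₀ hv₀.1)
      exact support_lemma (hV ▸ hp.1) (fun x hx => hv₀.2 x (V_sub_P hV hx)) h1
    · intro hp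
      have hsub : ((V.filter (fun x => evalDir y x = evalDir y v₀) : Finset (Fin d → ℝ)) :
          Set (Fin d → ℝ)) ⊆ (V : Set (Fin d → ℝ)) := by
        intro x hx
        simp only [Finset.coe_filter, Set.mem_setOf] at hx
        exact hx.1
      have hpP : p ∈ P := by
        rw [hV]; exact convexHull_mono hsub hp
      refine ⟨hpP, ?_⟩
      have hge : evalDir y v₀ ≤ evalDir y p := by
        have hneg : evalDir (fun i => -(y i)) p ≤ -(evalDir y v₀) := by
          apply evalDir_le_hull hp
          intro x hx
          rw [Finset.mem_filter] at hx
          rw [evalDir_neg, hx.2]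
        rw [evalDir_neg] at hneg
        linarith
      intro q hq
      calc evalDir y q ≤ evalDir y v₀ := hv₀.2 q hq
        _ ≤ evalDir y p := hge

/-- For an extreme point of a maximal face, a separating direction exists. -/
lemma exposing_dir (hV : P = convexHull ℝ (V : Set (Fin d → ℝ))) (hVne : V.Nonempty)
    {y v : Fin d → ℝ} (hv : v ∈ Set.extremePoints ℝ (maxFace P y)) :
    ∃ z : Fin d → ℝ, ∀ x ∈ V, x ∈ maxFace P y → x ≠ v → evalDir z x < evalDir z v := by
  obtain ⟨c, hc1, hc2, hc3⟩ := maxFace_eq_hull hV hVne y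
  set Vy := V.filter (fun x => evalDir y x = c) with hVy
  have hvVy : v ∈ Vy := by
    have := extremePoints_convexHull_subset (𝕜 := ℝ) (hc3 ▸ hv)
    exact_mod_cast this
  have hnot : v ∉ convexHull ℝ ((Vy.erase v : Finset (Fin d → ℝ)) : Set (Fin d → ℝ)) := by
    intro hmem
    have hsub : ((Vy.erase v : Finset (Fin d → ℝ)) : Set (Fin d → ℝ)) ⊆
        ((Vy : Finset (Fin d → ℝ)) : Set (Fin d → ℝ)) := by
      intro x hx
      simp only [Finset.coe_erase, Set.mem_diff] at hx
      exact hx.1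
    have hvex : v ∈ Set.extremePoints ℝ (convexHull ℝ
        ((Vy.erase v : Finset (Fin d → ℝ)) : Set (Fin d → ℝ))) := by
      apply extreme_in_subset (P := maxFace P y)
      · exact hv
      · exact hmem
      · rw [hc3]; exact convexHull_mono hsub
    have := extremePoints_convexHull_subset (𝕜 := ℝ) hvex
    exact (Finset.notMem_erase v Vy) (by exact_mod_cast this)
  obtain ⟨f, u, hfs, hfv⟩ := geometric_hahn_banach_closed_point
    (convex_convexHull ℝ _) ((Vy.erase v).finite_toSet.isClosed_convexHull (𝕜 := ℝ)) hnot
  refine ⟨fun i => f (fun j => if i = j then 1 else 0), ?_⟩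
  intro x hxV hxF hxv
  have hxVy : x ∈ Vy := by
    rw [hVy, Finset.mem_filter]
    exact ⟨hxV, hc2 x hxF⟩
  have hxe : x ∈ convexHull ℝ ((Vy.erase v : Finset (Fin d → ℝ)) : Set (Fin d → ℝ)) := by
    apply subset_convexHull
    rw [Finset.coe_erase]
    exact ⟨hxVy, fun h => hxv h⟩
  have h1 : f x < u := hfs x hxe
  rw [← clm_eq_evalDir, ← clm_eq_evalDir]
  linarith

end S5M


end S5Aux

namespace S5Main
open S5Aux S5Aux.S5 S5Aux.S5M

variable {d : ℕ} {P : Set (Fin d → ℝ)} {V : Finset (Fin d → ℝ)}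

lemma small_mono {A B t t₀ : ℝ} (h : 0 < A + t₀ * B) (hA : 0 ≤ A) (ht : 0 < t) (ht₀ : t ≤ t₀) :
    0 < A + t * B := by
  rcases le_or_gt B 0 with hB | hB
  · have : t₀ * B ≤ t * B := mul_le_mul_of_nonpos_right ht₀ hB
    linarith
  · have : 0 < t * B := mul_pos ht hB
    linarith

lemma evalDir_pert (y ξv x : Fin d → ℝ) (t : ℝ) :
    evalDir (fun i => y i + t * ξv i) x = evalDir y x + t * evalDir ξv x := by
  have h : (fun i => y i + t * ξv i) = fun i => 1 * y i + t * ξv i := by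
    funext i; ring
  rw [h, evalDir_comb]; ring

def yref (σ : Equiv.Perm (Fin d)) : Fin d → ℝ := fun i => ((σ.symm i : ℕ) : ℝ)

lemma yref_inj (σ : Equiv.Perm (Fin d)) : Function.Injective (yref σ) := by
  intro i j h
  have h1 : ((σ.symm i : ℕ) : ℝ) = ((σ.symm j : ℕ) : ℝ) := h
  have h2 : (σ.symm i : ℕ) = (σ.symm j : ℕ) := Nat.cast_injective h1
  exact σ.symm.injective (Fin.ext h2)

lemma yref_strict (σ : Equiv.Perm (Fin d)) : StrictMono (yref σ ∘ σ) := by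
  intro a b hab
  simp only [Function.comp, yref, Equiv.symm_apply_apply]
  exact_mod_cast hab

/-- Key step: identifying the vertex attached to a sorted direction. -/
lemma vert_eq (hgp : IsGenPerm P)
    {vert : Equiv.Perm (Fin d) → Fin d → ℝ}
    (hvert : ∀ σ, maxFace P (yref σ) = {vert σ}) {z : Fin d → ℝ}
    {σ : Equiv.Perm (Fin d)} (hz : StrictMono (z ∘ σ)) {u : Fin d → ℝ}
    (hu : maxFace P z = {u}) : u = vert σ := by
  have hmono : ∀ i j, z i ≤ z j → yref σ i ≤ yref σ j := by
    intro i j hij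
    have ha : z (σ (σ.symm i)) ≤ z (σ (σ.symm j)) := by
      simpa using hij
    have hab : σ.symm i ≤ σ.symm j := by
      by_contra hc
      push_neg at hc
      have := hz hc
      simp only [Function.comp] at this
      exact absurd ha (not_le.mpr this)
    show ((σ.symm i : ℕ) : ℝ) ≤ ((σ.symm j : ℕ) : ℝ)
    exact_mod_cast hab
  have := stepB' hgp hu hmono
  rw [hvert σ] at this
  exact this

lemma cone_mem (hgp : IsGenPerm P)
    {vert : Equiv.Perm (Fin d) → Fin d → ℝ}
    (hvert : ∀ σ, maxFace P (yref σ) = {vert σ}) {y : Fin d → ℝ}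
    {σ : Equiv.Perm (Fin d)} (hmono : Monotone (y ∘ σ)) :
    vert σ ∈ maxFace P y := by
  apply stepB' hgp (hvert σ)
  intro i j hij
  have hab : σ.symm i ≤ σ.symm j := by
    have : ((σ.symm i : ℕ) : ℝ) ≤ ((σ.symm j : ℕ) : ℝ) := hij
    exact_mod_cast this
  have := hmono hab
  simpa using this

/-- The universal perturbation lemma. -/
lemma pert {y ξv v : Fin d → ℝ} (hξinj : Function.Injective ξv)
    (hsep : ∀ x ∈ V, x ≠ v → (evalDir y x < evalDir y v ∨
      (evalDir y x = evalDir y v ∧ evalDir ξv x < evalDir ξv v))) :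
    ∃ (u : Fin d → ℝ) (σ : Equiv.Perm (Fin d)),
      Function.Injective u ∧ StrictMono (u ∘ σ) ∧
      (∀ i j, y i < y j → u i < u j) ∧
      (∀ i j, y i = y j → ξv i < ξv j → u i < u j) ∧
      (∀ i j, u i ≤ u j → y i ≤ y j) ∧
      (∀ i j, u i < u j → y i = y j → ξv i < ξv j) ∧
      (∀ x ∈ V, x ≠ v → evalDir u x < evalDir u v) := by
  obtain ⟨t₁, ht₁, hs₁⟩ := exists_small
    ((Finset.univ : Finset (Fin d × Fin d)).filter
      (fun p => y p.1 < y p.2 ∨ (y p.1 = y p.2 ∧ ξv p.1 < ξv p.2)))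
    (fun p => y p.2 - y p.1) (fun p => ξv p.2 - ξv p.1)
    (by
      intro p hp
      rw [Finset.mem_filter] at hp
      rcases hp.2 with h | ⟨h1, h2⟩
      · left; linarith
      · right; constructor <;> linarith)
  obtain ⟨t₂, ht₂, hs₂⟩ := exists_small (V.erase v)
    (fun x => evalDir y v - evalDir y x) (fun x => evalDir ξv v - evalDir ξv x)
    (by
      intro x hx
      rw [Finset.mem_erase] at hx
      rcases hsep x hx.2 hx.1 with h | ⟨h1, h2⟩
      · left; linarith
      · right; constructor <;> linarith)
  set t := min t₁ t₂ with htdef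
  have ht : 0 < t := lt_min ht₁ ht₂
  set u : Fin d → ℝ := fun i => y i + t * ξv i with hu
  have hkey : ∀ i j, (y i < y j ∨ (y i = y j ∧ ξv i < ξv j)) → u i < u j := by
    intro i j hij
    have hmem : (i, j) ∈ (Finset.univ : Finset (Fin d × Fin d)).filter
        (fun p => y p.1 < y p.2 ∨ (y p.1 = y p.2 ∧ ξv p.1 < ξv p.2)) := by
      rw [Finset.mem_filter]
      exact ⟨Finset.mem_univ _, hij⟩
    have h0 := hs₁ (i, j) hmem
    have hA : (0:ℝ) ≤ y j - y i := by
      rcases hij with h | ⟨h, _⟩ <;> simp <;> linarith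
    have := small_mono h0 hA ht (min_le_left _ _)
    simp only [hu]
    linarith
  have h3 : ∀ i j, y i < y j → u i < u j := fun i j h => hkey i j (Or.inl h)
  have h4 : ∀ i j, y i = y j → ξv i < ξv j → u i < u j :=
    fun i j h1 h2 => hkey i j (Or.inr ⟨h1, h2⟩)
  have h1 : Function.Injective u := by
    intro i j hij
    by_contra hne
    rcases lt_trichotomy (y i) (y j) with h | h | h
    · exact absurd hij (ne_of_lt (h3 _ _ h))
    · rcases lt_trichotomy (ξv i) (ξv j) with h' | h' | h'
      · exact absurd hij (ne_of_lt (h4 _ _ h h'))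
      · exact hne (hξinj h')
      · exact absurd hij.symm (ne_of_lt (h4 _ _ h.symm h'))
    · exact absurd hij.symm (ne_of_lt (h3 _ _ h))
  obtain ⟨σ, hσ⟩ := sort_exists h1
  have h5 : ∀ i j, u i ≤ u j → y i ≤ y j := by
    intro i j hij
    by_contra hc
    push_neg at hc
    exact absurd hij (not_le.mpr (h3 _ _ hc))
  have h6 : ∀ i j, u i < u j → y i = y j → ξv i < ξv j := by
    intro i j hij hy
    rcases lt_trichotomy (ξv i) (ξv j) with h | h | h
    · exact h
    · exact absurd (hξinj h) (fun he => by rw [he] at hij; exact lt_irrefl _ hij)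
    · exact absurd hij (not_lt.mpr (le_of_lt (h4 _ _ hy.symm h)))
  refine ⟨u, σ, h1, hσ, h3, h4, h5, h6, ?_⟩
  intro x hx hxv
  have hmem : x ∈ V.erase v := Finset.mem_erase.mpr ⟨hxv, hx⟩
  have h0 := hs₂ x hmem
  have hA : (0:ℝ) ≤ evalDir y v - evalDir y x := by
    rcases hsep x hx hxv with h | ⟨h, _⟩ <;> linarith
  have := small_mono h0 hA ht (min_le_right _ _)
  have he : evalDir u x = evalDir y x + t * evalDir ξv x := evalDir_pert y ξv x t
  have he' : evalDir u v = evalDir y v + t * evalDir ξv v := evalDir_pert y ξv v t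
  rw [he, he']
  linarith

end S5Main

namespace S5Main
open S5Aux S5Aux.S5 S5Aux.S5M

variable {d : ℕ} {P : Set (Fin d → ℝ)} {V : Finset (Fin d → ℝ)}

def Jf (ξv : Fin d → ℝ) (σ : Equiv.Perm (Fin d)) : Finset ℕ :=
  (Finset.range (d-1)).filter
    (fun i => nth (fun a => ξv (σ a)) (i+1) < nth (fun a => ξv (σ a)) i)

lemma Jf_subset (ξv : Fin d → ℝ) (σ : Equiv.Perm (Fin d)) :
    Jf ξv σ ⊆ Finset.range (d-1) := Finset.filter_subset _ _

lemma mem_Jf {ξv : Fin d → ℝ} {σ : Equiv.Perm (Fin d)} {i : ℕ} (h1 : i + 1 < d) :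
    i ∈ Jf ξv σ ↔ ξv (σ ⟨i+1, h1⟩) < ξv (σ ⟨i, by omega⟩) := by
  unfold Jf
  rw [Finset.mem_filter, Finset.mem_range, nth_lt _ h1, nth_lt _ (show i < d by omega)]
  constructor
  · exact fun h => h.2
  · exact fun h => ⟨by omega, h⟩

def okG (ξv : Fin d → ℝ) (σ : Equiv.Perm (Fin d)) (y : Fin d → ℝ) : Prop :=
  Monotone (y ∘ σ) ∧ ∀ i : ℕ, ∀ h1 : i + 1 < d, i ∉ Jf ξv σ →
    y (σ ⟨i, by omega⟩) < y (σ ⟨i+1, h1⟩)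

def okH (ξv : Fin d → ℝ) (σ : Equiv.Perm (Fin d)) (y : Fin d → ℝ) : Prop :=
  Monotone (y ∘ σ) ∧ ∀ i : ℕ, ∀ h1 : i + 1 < d, i ∈ Jf ξv σ →
    y (σ ⟨i, by omega⟩) < y (σ ⟨i+1, h1⟩)

lemma fin_mk_le {i : ℕ} (h1 : i + 1 < d) :
    (⟨i, by omega⟩ : Fin d) ≤ ⟨i+1, h1⟩ := by
  simp [Fin.le_def]

lemma fin_mk_lt {i : ℕ} (h1 : i + 1 < d) :
    (⟨i, by omega⟩ : Fin d) < ⟨i+1, h1⟩ := by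
  simp [Fin.lt_def]

section Main

variable (hgp : IsGenPerm P) (hV : P = convexHull ℝ (V : Set (Fin d → ℝ)))
  {vert : Equiv.Perm (Fin d) → Fin d → ℝ}
  (hvert : ∀ σ, maxFace P (yref σ) = {vert σ})
  {ξ : (Fin d → ℝ) → Fin d → ℝ}
  (hξinj : ∀ w, Function.Injective (ξ w))
  (hξP : ∀ w : Fin d → ℝ, (∃ σ, vert σ = w) → maxFace P (ξ w) = {w})

include hgp hV hvert hξP in
lemma L1a {σ : Equiv.Perm (Fin d)} {y : Fin d → ℝ}
    (hok : okG (ξ (vert σ)) σ y) : maxFace P y = {vert σ} := by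
  set v := vert σ with hvdef
  have hmv : maxFace P (ξ v) = {v} := hξP v ⟨σ, rfl⟩
  have hsm := singleMax_of_maxFace hV hmv
  obtain ⟨t, ht, hts⟩ := exists_small (Finset.range (d-1))
    (fun i => if h1 : i + 1 < d then y (σ ⟨i+1, h1⟩) - y (σ ⟨i, by omega⟩) else 1)
    (fun i => if h1 : i + 1 < d then
      -(ξ v (σ ⟨i+1, h1⟩) - ξ v (σ ⟨i, by omega⟩)) else 0)
    (by
      intro i hi
      rw [Finset.mem_range] at hi
      have h1 : i + 1 < d := by omega
      rw [dif_pos h1, dif_pos h1]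
      by_cases hiJ : i ∈ Jf (ξ v) σ
      · have hξlt := (mem_Jf h1).1 hiJ
        have hyle : y (σ ⟨i, by omega⟩) ≤ y (σ ⟨i+1, h1⟩) := hok.1 (fin_mk_le h1)
        rcases eq_or_lt_of_le hyle with he | hlt
        · right; constructor <;> [linarith; linarith]
        · left; linarith
      · have := hok.2 i h1 hiJ
        left; linarith)
  set u : Fin d → ℝ := fun a => y a + t * (-(ξ v a)) with hu
  have husm : StrictMono (u ∘ σ) := by
    apply strictMono_of_succ
    intro i h1
    rw [nth_lt _ (show i < d by omega), nth_lt _ h1]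
    have := hts i (Finset.mem_range.mpr (by omega))
    rw [dif_pos h1, dif_pos h1] at this
    simp only [Function.comp, hu]
    linarith
  have hvmem : v ∈ maxFace P u := cone_mem hgp hvert husm.monotone
  apply maxFace_singleton_of hV hsm.1
  intro x hx hxv
  have h1 : evalDir y x = evalDir u x + t * evalDir (ξ v) x := by
    have hyu : y = fun a => u a + t * (ξ v a) := by
      funext a; simp only [hu]; ring
    conv_lhs => rw [hyu]
    exact evalDir_pert u (ξ v) x t
  have h2 : evalDir y v = evalDir u v + t * evalDir (ξ v) v := by
    have hyu : y = fun a => u a + t * (ξ v a) := by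
      funext a; simp only [hu]; ring
    conv_lhs => rw [hyu]
    exact evalDir_pert u (ξ v) v t
  have h3 : evalDir u x ≤ evalDir u v := hvmem.2 x (V_sub_P hV hx)
  have h4 : evalDir (ξ v) x < evalDir (ξ v) v := hsm.2 x hx hxv
  rw [h1, h2]
  have := mul_lt_mul_of_pos_left h4 ht
  linarith

include hgp hV hvert hξP in
lemma L1b (hξinj : ∀ w, Function.Injective (ξ w)) {y v : Fin d → ℝ}
    (h : maxFace P y = {v}) :
    ∃ σ, vert σ = v ∧ okG (ξ v) σ y := by
  have hsm := singleMax_of_maxFace hV h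
  have hwinj : Function.Injective (fun i : Fin d => ((i : ℕ) : ℝ)) := by
    intro i j hij
    exact Fin.ext (Nat.cast_injective hij)
  obtain ⟨u₀, σ₀, hu₀inj, hu₀sm, -, -, -, -, hu₀sep⟩ := pert (V := V) hwinj
    (fun x hx hxv => Or.inl (hsm.2 x hx hxv))
  have hmu₀ : maxFace P u₀ = {v} := maxFace_singleton_of hV hsm.1 hu₀sep
  have hv0 : v = vert σ₀ := vert_eq hgp hvert hu₀sm hmu₀
  have hξneg : Function.Injective (fun i => -(ξ v i)) := by
    intro i j hij
    exact hξinj v (neg_injective hij)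
  obtain ⟨u, σ, huinj, husm, hu3, hu4, hu5, hu6, husep⟩ := pert (V := V) hξneg
    (fun x hx hxv => Or.inl (hsm.2 x hx hxv))
  have hmu : maxFace P u = {v} := maxFace_singleton_of hV hsm.1 husep
  have hveq : v = vert σ := vert_eq hgp hvert husm hmu
  refine ⟨σ, hveq.symm, ?_, ?_⟩
  · intro a b hab
    exact hu5 _ _ (husm.monotone hab)
  · intro i h1 hiJ
    have hle : y (σ ⟨i, by omega⟩) ≤ y (σ ⟨i+1, h1⟩) := by
      apply hu5
      exact (husm.monotone (fin_mk_le h1))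
    rcases eq_or_lt_of_le hle with heq | hlt
    · exfalso
      have hult : u (σ ⟨i, by omega⟩) < u (σ ⟨i+1, h1⟩) := husm (fin_mk_lt h1)
      have := hu6 _ _ hult heq
      exact hiJ ((mem_Jf h1).2 (by linarith))
    · exact hlt

include hgp hV hvert hξP in
lemma L1c (hξinj : ∀ w, Function.Injective (ξ w)) {σ σ' : Equiv.Perm (Fin d)}
    {y : Fin d → ℝ} (h1 : okG (ξ (vert σ)) σ y) (h2 : okG (ξ (vert σ')) σ' y) :
    σ = σ' := by
  have e1 := L1a hgp hV hvert hξP h1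
  have e2 := L1a hgp hV hvert hξP h2
  have hvv : vert σ' = vert σ := by
    rw [e1] at e2
    exact (Set.singleton_eq_singleton_iff.1 e2).symm
  set v := vert σ with hvdef
  have hsm := singleMax_of_maxFace hV e1
  have hξneg : Function.Injective (fun i => -(ξ v i)) := by
    intro i j hij
    exact hξinj v (neg_injective hij)
  obtain ⟨u, τ, huinj, -, hu3, hu4, -, -, -⟩ := pert (V := V) hξneg
    (fun x hx hxv => Or.inl (hsm.2 x hx hxv))
  have key : ∀ ρ : Equiv.Perm (Fin d), okG (ξ v) ρ y → StrictMono (u ∘ ρ) := by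
    intro ρ hρ
    apply strictMono_of_succ
    intro i hi1
    rw [nth_lt _ (show i < d by omega), nth_lt _ hi1]
    have hle : y (ρ ⟨i, by omega⟩) ≤ y (ρ ⟨i+1, hi1⟩) := hρ.1 (fin_mk_le hi1)
    rcases eq_or_lt_of_le hle with heq | hlt
    · have hiJ : i ∈ Jf (ξ v) ρ := by
        by_contra hc
        exact absurd heq (ne_of_lt (hρ.2 i hi1 hc))
      have hξlt := (mem_Jf hi1).1 hiJ
      exact hu4 _ _ heq (by linarith)
    · exact hu3 _ _ hlt
  exact sort_unique huinj (key σ h1) (key σ' (hvv ▸ h2))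

include hgp hV hvert hξP in
lemma L2a {σ : Equiv.Perm (Fin d)} {y : Fin d → ℝ}
    (hok : okH (ξ (vert σ)) σ y) :
    vert σ ∈ Set.extremePoints ℝ (maxFace P y) := by
  have hv1 : vert σ ∈ maxFace P y := cone_mem hgp hvert hok.1
  have hmξ : maxFace P (ξ (vert σ)) = {vert σ} := hξP _ ⟨σ, rfl⟩
  have hext : vert σ ∈ Set.extremePoints ℝ P := extreme_of_singleton hV hmξ
  exact extreme_in_subset hext hv1 (maxFace_subset y)

end Main
end S5Main

namespace S5Main
open S5Aux S5Aux.S5 S5Aux.S5M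

variable {d : ℕ} {P : Set (Fin d → ℝ)} {V : Finset (Fin d → ℝ)}

section Main2

variable (hgp : IsGenPerm P) (hV : P = convexHull ℝ (V : Set (Fin d → ℝ)))
  {vert : Equiv.Perm (Fin d) → Fin d → ℝ}
  (hvert : ∀ σ, maxFace P (yref σ) = {vert σ})
  {ξ : (Fin d → ℝ) → Fin d → ℝ}
  (hξP : ∀ w : Fin d → ℝ, (∃ σ, vert σ = w) → maxFace P (ξ w) = {w})

include hgp hV hvert hξP in
lemma L2b (hVne : V.Nonempty) (hξinj : ∀ w, Function.Injective (ξ w)) {y v : Fin d → ℝ}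
    (hv : v ∈ Set.extremePoints ℝ (maxFace P y)) :
    ∃ σ, vert σ = v ∧ okH (ξ v) σ y := by
  have hvF : v ∈ maxFace P y := hv.1
  have hvP : v ∈ P := (maxFace_subset y) hvF
  obtain ⟨z, hz⟩ := exposing_dir hV hVne hv
  set w : Fin d → ℝ := fun i => ((i : ℕ) : ℝ) with hw
  obtain ⟨t₃, ht₃, hs₃⟩ := exists_small ((V.erase v).filter (fun x => x ∈ maxFace P y))
    (fun x => evalDir z v - evalDir z x) (fun x => evalDir w v - evalDir w x)
    (by
      intro x hx
      rw [Finset.mem_filter, Finset.mem_erase] at hx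
      left
      have := hz x hx.1.2 hx.2 hx.1.1
      linarith)
  set bad : Finset ℝ := ((Finset.univ : Finset (Fin d × Fin d)).filter
      (fun p => p.1 ≠ p.2)).image (fun p => (z p.1 - z p.2) / (w p.2 - w p.1)) with hbad
  have hIoo : (Set.Ioo (0:ℝ) t₃).Infinite := Set.infinite_coe_iff.1 (Set.Ioo.infinite ht₃)
  obtain ⟨δ, hδmem⟩ := (hIoo.diff bad.finite_toSet).nonempty
  obtain ⟨⟨hδ0, hδt⟩, hδbad⟩ := hδmem
  set z' : Fin d → ℝ := fun i => z i + δ * w i with hz'def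
  have hz'inj : Function.Injective z' := by
    intro i j hij
    by_contra hne
    have hwne : w j - w i ≠ 0 := by
      simp only [hw]
      intro hc
      apply hne
      apply Fin.ext
      have h' : ((i:ℕ):ℝ) = ((j:ℕ):ℝ) := by linarith
      exact_mod_cast h'
    apply hδbad
    simp only [hz'def] at hij
    have hd : δ = (z i - z j) / (w j - w i) := by
      rw [eq_div_iff hwne]
      linarith
    rw [hd]
    apply Finset.mem_coe.2
    rw [hbad]
    apply Finset.mem_image.2
    exact ⟨(i, j), by simp [hne], rfl⟩
  have hz'sep : ∀ x ∈ V, x ∈ maxFace P y → x ≠ v → evalDir z' x < evalDir z' v := by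
    intro x hxV hxF hxv
    have hmem : x ∈ (V.erase v).filter (fun x => x ∈ maxFace P y) := by
      rw [Finset.mem_filter, Finset.mem_erase]
      exact ⟨⟨hxv, hxV⟩, hxF⟩
    have h0 := hs₃ x hmem
    have hA : (0:ℝ) ≤ evalDir z v - evalDir z x := by
      have := hz x hxV hxF hxv
      linarith
    have hfin := small_mono h0 hA hδ0 (le_of_lt hδt)
    have e1 : evalDir z' x = evalDir z x + δ * evalDir w x := evalDir_pert z w x δ
    have e2 : evalDir z' v = evalDir z v + δ * evalDir w v := evalDir_pert z w v δ
    rw [e1, e2]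
    linarith
  -- step 1 : v is a vertex of the fan family
  obtain ⟨u₀, σ₀, hu₀inj, hu₀sm, -, -, -, -, hu₀sep⟩ := pert (V := V) hz'inj
    (by
      intro x hx hxv
      have hle : evalDir y x ≤ evalDir y v := hvF.2 x (V_sub_P hV hx)
      rcases eq_or_lt_of_le hle with heq | hlt
      · right
        have hxF : x ∈ maxFace P y :=
          ⟨V_sub_P hV hx, fun p hp => heq ▸ hvF.2 p hp⟩
        exact ⟨heq, hz'sep x hx hxF hxv⟩
      · exact Or.inl hlt)
  have hmu₀ : maxFace P u₀ = {v} := maxFace_singleton_of hV hvP hu₀sep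
  have hv0 : v = vert σ₀ := vert_eq hgp hvert hu₀sm hmu₀
  -- step 2
  have hmξ : maxFace P (ξ v) = {v} := hξP v ⟨σ₀, hv0.symm⟩
  have hsmξ := singleMax_of_maxFace hV hmξ
  obtain ⟨u, σ, huinj, husm, hu3, hu4, hu5, hu6, husep⟩ := pert (V := V) (hξinj v)
    (by
      intro x hx hxv
      have hle : evalDir y x ≤ evalDir y v := hvF.2 x (V_sub_P hV hx)
      rcases eq_or_lt_of_le hle with heq | hlt
      · exact Or.inr ⟨heq, hsmξ.2 x hx hxv⟩
      · exact Or.inl hlt)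
  have hmu : maxFace P u = {v} := maxFace_singleton_of hV hvP husep
  have hveq : v = vert σ := vert_eq hgp hvert husm hmu
  refine ⟨σ, hveq.symm, ?_, ?_⟩
  · intro a b hab
    exact hu5 _ _ (husm.monotone hab)
  · intro i h1 hiJ
    have hle : y (σ ⟨i, by omega⟩) ≤ y (σ ⟨i+1, h1⟩) := by
      apply hu5
      exact husm.monotone (fin_mk_le h1)
    rcases eq_or_lt_of_le hle with heq | hlt
    · exfalso
      have hult : u (σ ⟨i, by omega⟩) < u (σ ⟨i+1, h1⟩) := husm (fin_mk_lt h1)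
      have h2 := hu6 _ _ hult heq
      have h3 := (mem_Jf h1).1 hiJ
      linarith
    · exact hlt

include hgp hV hvert hξP in
lemma L2c (hξinj : ∀ w, Function.Injective (ξ w)) {σ σ' : Equiv.Perm (Fin d)}
    {y : Fin d → ℝ} (hvv : vert σ' = vert σ)
    (h1 : okH (ξ (vert σ)) σ y) (h2 : okH (ξ (vert σ')) σ' y) : σ = σ' := by
  set v := vert σ with hvdef
  have hvF : v ∈ maxFace P y := cone_mem hgp hvert h1.1
  have hmξ : maxFace P (ξ v) = {v} := hξP v ⟨σ, rfl⟩
  have hsmξ := singleMax_of_maxFace hV hmξ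
  obtain ⟨u, τ, huinj, -, hu3, hu4, -, -, -⟩ := pert (V := V) (hξinj v)
    (by
      intro x hx hxv
      have hle : evalDir y x ≤ evalDir y v := hvF.2 x (V_sub_P hV hx)
      rcases eq_or_lt_of_le hle with heq | hlt
      · exact Or.inr ⟨heq, hsmξ.2 x hx hxv⟩
      · exact Or.inl hlt)
  have key : ∀ ρ : Equiv.Perm (Fin d), okH (ξ v) ρ y → StrictMono (u ∘ ρ) := by
    intro ρ hρ
    apply strictMono_of_succ
    intro i hi1
    rw [nth_lt _ (show i < d by omega), nth_lt _ hi1]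
    have hle : y (ρ ⟨i, by omega⟩) ≤ y (ρ ⟨i+1, hi1⟩) := hρ.1 (fin_mk_le hi1)
    rcases eq_or_lt_of_le hle with heq | hlt
    · have hiJ : i ∉ Jf (ξ v) ρ := fun hc => absurd heq (ne_of_lt (hρ.2 i hi1 hc))
      have hne : ξ v (ρ ⟨i, by omega⟩) ≠ ξ v (ρ ⟨i+1, hi1⟩) := by
        intro hc
        have h' := ρ.injective (hξinj v hc)
        rw [Fin.ext_iff] at h'
        simp only [Fin.val_mk] at h'
        omega
      have hξlt : ξ v (ρ ⟨i, by omega⟩) < ξ v (ρ ⟨i+1, hi1⟩) := by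
        rcases lt_or_ge (ξ v (ρ ⟨i, by omega⟩)) (ξ v (ρ ⟨i+1, hi1⟩)) with h' | h'
        · exact h'
        · exfalso
          rcases eq_or_lt_of_le h' with h'' | h''
          · exact hne h''.symm
          · exact hiJ ((mem_Jf hi1).2 h'')
      exact hu4 _ _ heq hξlt
    · exact hu3 _ _ hlt
  exact sort_unique huinj (key σ h1) (key σ' (hvv ▸ h2))

end Main2
end S5Main

namespace S5Main
open S5Aux S5Aux.S5 S5Aux.S5M

variable {d : ℕ}

lemma HOfin_iff_okH {m : ℕ} {σ : Equiv.Perm (Fin d)} {y : Fin d → ℕ} (ξv : Fin d → ℝ) :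
    y ∈ HOfin d m σ (Jf ξv σ) ↔ (∀ i, y i ∈ Finset.Icc 1 m) ∧
      okH ξv σ (fun i => (y i : ℝ)) := by
  rw [mem_HOfin]
  constructor
  · rintro ⟨hc, hm, hs⟩
    refine ⟨hc, ?_, ?_⟩
    · have hmono : Monotone (fun a => y (σ a)) := mono_of_succ hm
      intro a b hab
      exact Nat.cast_le.2 (hmono hab)
    · intro i h1 hiJ
      have := hs i hiJ h1
      rw [nth_lt _ (show i < d by omega), nth_lt _ h1] at this
      show ((y (σ ⟨i, by omega⟩) : ℝ)) < ((y (σ ⟨i+1, h1⟩) : ℝ))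
      exact_mod_cast this
  · rintro ⟨hc, hm, hs⟩
    refine ⟨hc, ?_, ?_⟩
    · intro i h1
      rw [nth_lt _ (show i < d by omega), nth_lt _ h1]
      have : ((y (σ ⟨i, by omega⟩) : ℝ)) ≤ ((y (σ ⟨i+1, h1⟩) : ℝ)) := hm (fin_mk_le h1)
      exact_mod_cast this
    · intro i hiJ h1
      rw [nth_lt _ (show i < d by omega), nth_lt _ h1]
      have : ((y (σ ⟨i, by omega⟩) : ℝ)) < ((y (σ ⟨i+1, h1⟩) : ℝ)) := hs i h1 hiJ
      exact_mod_cast this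

lemma HOfin_iff_okG {m : ℕ} {σ : Equiv.Perm (Fin d)} {y : Fin d → ℕ} (ξv : Fin d → ℝ) :
    y ∈ HOfin d m σ ((Finset.range (d-1)) \ Jf ξv σ) ↔ (∀ i, y i ∈ Finset.Icc 1 m) ∧
      okG ξv σ (fun i => (y i : ℝ)) := by
  rw [mem_HOfin]
  constructor
  · rintro ⟨hc, hm, hs⟩
    refine ⟨hc, ?_, ?_⟩
    · have hmono : Monotone (fun a => y (σ a)) := mono_of_succ hm
      intro a b hab
      exact Nat.cast_le.2 (hmono hab)
    · intro i h1 hiJ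
      have hiT : i ∈ (Finset.range (d-1)) \ Jf ξv σ := by
        rw [Finset.mem_sdiff, Finset.mem_range]
        exact ⟨by omega, hiJ⟩
      have := hs i hiT h1
      rw [nth_lt _ (show i < d by omega), nth_lt _ h1] at this
      show ((y (σ ⟨i, by omega⟩) : ℝ)) < ((y (σ ⟨i+1, h1⟩) : ℝ))
      exact_mod_cast this
  · rintro ⟨hc, hm, hs⟩
    refine ⟨hc, ?_, ?_⟩
    · intro i h1
      rw [nth_lt _ (show i < d by omega), nth_lt _ h1]
      have : ((y (σ ⟨i, by omega⟩) : ℝ)) ≤ ((y (σ ⟨i+1, h1⟩) : ℝ)) := hm (fin_mk_le h1)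
      exact_mod_cast this
    · intro i hiT h1
      rw [Finset.mem_sdiff] at hiT
      rw [nth_lt _ (show i < d by omega), nth_lt _ h1]
      have : ((y (σ ⟨i, by omega⟩) : ℝ)) < ((y (σ ⟨i+1, h1⟩) : ℝ)) := hs i h1 hiT.2
      exact_mod_cast this

/-- evaluation of the basic factor product -/
lemma eval_prod_pos (m j : ℕ) :
    ∏ t ∈ Finset.range d, ((m : ℝ) + ((j : ℝ) - t)) = ((m + j).descFactorial d : ℝ) := by
  rw [← prod_cast_desc (m + j) d]
  refine Finset.prod_congr rfl fun t _ => ?_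
  push_cast
  ring

lemma eval_prod_neg (m j : ℕ) (hj : j ≤ d - 1) (hm : 0 < m) :
    (-1 : ℝ)^d * ∏ t ∈ Finset.range d, (-(m : ℝ) + ((j : ℝ) - t))
      = (((m + ((d-1) - j)).descFactorial d : ℕ) : ℝ) := by
  rw [← prod_cast_desc (m + ((d-1) - j)) d]
  have h1 : ∏ t ∈ Finset.range d, ((((m + ((d-1) - j)) : ℕ) : ℝ) - t)
      = ∏ t ∈ Finset.range d, ((((m + ((d-1) - j)) : ℕ) : ℝ) - (d - 1 - t : ℕ)) := by
    rw [← Finset.prod_range_reflect]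
  rw [h1]
  have h2 : (-1 : ℝ)^d = ∏ _t ∈ Finset.range d, (-1 : ℝ) := by
    rw [Finset.prod_const, Finset.card_range]
  rw [h2, ← Finset.prod_mul_distrib]
  refine Finset.prod_congr rfl fun t ht => ?_
  rw [Finset.mem_range] at ht
  have hd1 : 1 ≤ d := by omega
  have ht1 : t ≤ d - 1 := by omega
  push_cast [Nat.cast_sub hj, Nat.cast_sub ht1, Nat.cast_sub hd1]
  ring

lemma natDeg_fact (j e : ℕ) : (∏ t ∈ Finset.range e,
    (Polynomial.X + Polynomial.C ((j : ℝ) - t))).natDegree = e := by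
  rw [Polynomial.natDegree_prod_of_monic _ _ fun t _ => Polynomial.monic_X_add_C _]
  have h : ∀ i ∈ Finset.range e, (Polynomial.X + Polynomial.C ((j : ℝ) - i)).natDegree = 1 :=
    fun i _ => Polynomial.natDegree_X_add_C _
  rw [Finset.sum_congr rfl h]
  simp

end S5Main


open S5Aux S5Aux.S5 S5Aux.S5M S5Main

/-- For a generalized permutahedron `P ⊆ ℝ^d`, the number of `P`-generic
directions `y ∈ [m]^d = {1,…,m}^d` (those for which the `y`-maximal face `P_y` is a vertex)
agrees with a polynomial `χ_d(P)` of degree `d` in `m`, and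
`(-1)^d χ_d(P)(-m) = Σ_{y ∈ [m]^d} #(vertices of P_y)`. -/
theorem stmt5 {d : ℕ} (P : Set (Fin d → ℝ)) (hP : IsGenPerm P) :
    ∃ p : Polynomial ℝ, p.degree = (d : WithBot ℕ) ∧
      (∀ m : ℕ, 0 < m →
        p.eval (m : ℝ) =
          Set.ncard {y : Fin d → ℕ | (∀ i, y i ∈ Finset.Icc 1 m) ∧
            ∃ v, maxFace P (fun i => (y i : ℝ)) = {v}}) ∧
      (∀ m : ℕ, 0 < m →
        (-1 : ℝ) ^ d * p.eval (-(m : ℝ)) =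
          ∑ᶠ y ∈ {y : Fin d → ℕ | ∀ i, y i ∈ Finset.Icc 1 m},
            ((Set.extremePoints ℝ (maxFace P (fun i => (y i : ℝ)))).ncard : ℝ)) := by
  classical
  obtain ⟨V, hVne, hV⟩ := hP.1
  have hvex : ∀ σ : Equiv.Perm (Fin d), ∃ v, maxFace P (yref σ) = {v} :=
    fun σ => stepA hP hV hVne (yref_inj σ)
  choose vert hvert using hvex
  have hξex : ∀ v : Fin d → ℝ, ∃ ξv : Fin d → ℝ,
      Function.Injective ξv ∧ ((∃ σ, vert σ = v) → maxFace P ξv = {v}) := by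
    intro v
    by_cases h : ∃ σ, vert σ = v
    · obtain ⟨σ, hσ⟩ := h
      refine ⟨yref σ, yref_inj σ, fun _ => ?_⟩
      rw [hvert σ, hσ]
    · exact ⟨yref 1, yref_inj 1, fun hc => absurd hc h⟩
  choose ξ hξinj hξP using hξex
  set jnum : Equiv.Perm (Fin d) → ℕ := fun σ => (Jf (ξ (vert σ)) σ).card with hjnum
  have hjle : ∀ σ, jnum σ ≤ d - 1 := by
    intro σ
    have := Finset.card_le_card (Jf_subset (ξ (vert σ)) σ)
    rw [Finset.card_range] at this
    exact this
  set p : Polynomial ℝ := ∑ σ : Equiv.Perm (Fin d), Polynomial.C ((d.factorial : ℝ)⁻¹) *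
      ∏ t ∈ Finset.range d, (Polynomial.X + Polynomial.C ((jnum σ : ℝ) - t)) with hp
  have heval : ∀ x : ℝ, p.eval x = ∑ σ : Equiv.Perm (Fin d),
      (d.factorial : ℝ)⁻¹ * ∏ t ∈ Finset.range d, (x + ((jnum σ : ℝ) - t)) := by
    intro x
    rw [hp, Polynomial.eval_finset_sum]
    refine Finset.sum_congr rfl fun σ _ => ?_
    rw [Polynomial.eval_mul, Polynomial.eval_C, Polynomial.eval_prod]
    congr 1
    exact Finset.prod_congr rfl fun t _ => by
      rw [Polynomial.eval_add, Polynomial.eval_X, Polynomial.eval_C]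
  have hfacne : (d.factorial : ℝ) ≠ 0 := Nat.cast_ne_zero.2 (Nat.factorial_ne_zero d)
  refine ⟨p, ?_, ?_, ?_⟩
  · -- degree = d
    have hM : ∀ σ : Equiv.Perm (Fin d),
        (∏ t ∈ Finset.range d, (Polynomial.X + Polynomial.C ((jnum σ : ℝ) - t))).Monic :=
      fun σ => Polynomial.monic_prod_of_monic _ _ fun t _ => Polynomial.monic_X_add_C _
    have hMdeg : ∀ σ : Equiv.Perm (Fin d), (∏ t ∈ Finset.range d,
        (Polynomial.X + Polynomial.C ((jnum σ : ℝ) - t))).natDegree = d := by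
      intro σ
      exact natDeg_fact (jnum σ) d
    have hdegle : p.degree ≤ (d : WithBot ℕ) := by
      rw [hp]
      refine le_trans (Polynomial.degree_sum_le _ _) ?_
      apply Finset.sup_le
      intro σ _
      refine le_trans (Polynomial.degree_mul_le _ _) ?_
      have h1 : (Polynomial.C ((d.factorial : ℝ)⁻¹)).degree ≤ 0 := Polynomial.degree_C_le
      have h2 : (∏ t ∈ Finset.range d,
          (Polynomial.X + Polynomial.C ((jnum σ : ℝ) - t))).degree ≤ (d : WithBot ℕ) := by
        refine le_trans Polynomial.degree_le_natDegree ?_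
        rw [hMdeg σ]
      calc (Polynomial.C ((d.factorial : ℝ)⁻¹)).degree + (∏ t ∈ Finset.range d,
            (Polynomial.X + Polynomial.C ((jnum σ : ℝ) - t))).degree
          ≤ 0 + (d : WithBot ℕ) := add_le_add h1 h2
        _ = (d : WithBot ℕ) := zero_add _
    have hcoeff : p.coeff d = 1 := by
      rw [hp, Polynomial.finset_sum_coeff]
      have hterm : ∀ σ : Equiv.Perm (Fin d), (Polynomial.C ((d.factorial : ℝ)⁻¹) *
          ∏ t ∈ Finset.range d, (Polynomial.X + Polynomial.C ((jnum σ : ℝ) - t))).coeff d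
          = (d.factorial : ℝ)⁻¹ := by
        intro σ
        rw [Polynomial.coeff_C_mul]
        have h3 := (hM σ).coeff_natDegree
        rw [hMdeg σ] at h3
        rw [h3, mul_one]
      rw [Finset.sum_congr rfl fun σ _ => hterm σ, Finset.sum_const, Finset.card_univ,
        Fintype.card_perm, Fintype.card_fin, nsmul_eq_mul]
      exact mul_inv_cancel₀ hfacne
    exact le_antisymm hdegle (Polynomial.le_degree_of_ne_zero
      (by rw [hcoeff]; exact one_ne_zero))
  · -- counting generic directions
    intro m hm
    have hGset : {y : Fin d → ℕ | (∀ i, y i ∈ Finset.Icc 1 m) ∧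
        ∃ v, maxFace P (fun i => (y i : ℝ)) = {v}}
        = ↑(Finset.univ.biUnion (fun σ : Equiv.Perm (Fin d) =>
            HOfin d m σ ((Finset.range (d-1)) \ Jf (ξ (vert σ)) σ))) := by
      ext y
      simp only [Set.mem_setOf_eq, Finset.mem_coe, Finset.mem_biUnion, Finset.mem_univ,
        true_and]
      constructor
      · rintro ⟨hc, v, hv⟩
        obtain ⟨σ, hσv, hok⟩ := L1b hP hV hvert hξP hξinj hv
        refine ⟨σ, ?_⟩
        rw [HOfin_iff_okG]
        rw [← hσv] at hok
        exact ⟨hc, hok⟩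
      · rintro ⟨σ, hyH⟩
        rw [HOfin_iff_okG] at hyH
        exact ⟨hyH.1, vert σ, L1a hP hV hvert hξP hyH.2⟩
    rw [hGset, Set.ncard_coe_finset]
    have hdisj : ∀ σ ∈ (Finset.univ : Finset (Equiv.Perm (Fin d))), ∀ σ' ∈ Finset.univ,
        σ ≠ σ' → Disjoint (HOfin d m σ ((Finset.range (d-1)) \ Jf (ξ (vert σ)) σ))
          (HOfin d m σ' ((Finset.range (d-1)) \ Jf (ξ (vert σ')) σ')) := by
      intro σ _ σ' _ hne
      rw [Finset.disjoint_left]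
      intro y hy1 hy2
      rw [HOfin_iff_okG] at hy1 hy2
      exact hne (L1c hP hV hvert hξP hξinj hy1.2 hy2.2)
    rw [Finset.card_biUnion hdisj]
    have hcard : ∀ σ : Equiv.Perm (Fin d),
        (HOfin d m σ ((Finset.range (d-1)) \ Jf (ξ (vert σ)) σ)).card
          = (m + jnum σ).choose d := by
      intro σ
      rw [card_HOfin d m σ _ (Finset.sdiff_subset)]
      congr 2
      rw [Finset.card_sdiff_of_subset (Jf_subset _ _), Finset.card_range]
      have h5 := hjle σ
      simp only [hjnum] at h5 ⊢
      omega
    rw [Finset.sum_congr rfl fun σ _ => hcard σ]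
    rw [heval, Nat.cast_sum]
    refine Finset.sum_congr rfl fun σ _ => ?_
    rw [eval_prod_pos m (jnum σ), Nat.descFactorial_eq_factorial_mul_choose]
    rw [Nat.cast_mul]
    field_simp
  · -- reciprocity
    intro m hm
    have hcube : {y : Fin d → ℕ | ∀ i, y i ∈ Finset.Icc 1 m}
        = ↑(Fintype.piFinset fun _ : Fin d => Finset.Icc 1 m) := by
      ext y
      simp only [Set.mem_setOf_eq, Finset.mem_coe, Fintype.mem_piFinset]
    rw [hcube, finsum_mem_coe_finset]
    have hy : ∀ y : Fin d → ℕ, (∀ i, y i ∈ Finset.Icc 1 m) →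
        (Set.extremePoints ℝ (maxFace P (fun i => (y i : ℝ)))).ncard
        = (Finset.univ.filter (fun σ : Equiv.Perm (Fin d) =>
            y ∈ HOfin d m σ (Jf (ξ (vert σ)) σ))).card := by
      intro y hc
      have hset : Set.extremePoints ℝ (maxFace P (fun i => (y i : ℝ)))
          = ↑((Finset.univ.filter (fun σ : Equiv.Perm (Fin d) =>
              y ∈ HOfin d m σ (Jf (ξ (vert σ)) σ))).image vert) := by
        ext v
        rw [Finset.coe_image, Set.mem_image]
        constructor
        · intro hv
          obtain ⟨σ, hσv, hok⟩ := L2b hP hV hvert hξP hVne hξinj hv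
          refine ⟨σ, ?_, hσv⟩
          rw [Finset.mem_coe, Finset.mem_filter]
          refine ⟨Finset.mem_univ _, ?_⟩
          rw [HOfin_iff_okH]
          rw [← hσv] at hok
          exact ⟨hc, hok⟩
        · rintro ⟨σ, hσ, rfl⟩
          rw [Finset.mem_coe, Finset.mem_filter] at hσ
          have hok := ((HOfin_iff_okH _).1 hσ.2).2
          exact L2a hP hV hvert hξP hok
      rw [hset, Set.ncard_coe_finset]
      apply Finset.card_image_of_injOn
      intro σ hσ σ' hσ' hvv
      rw [Finset.coe_filter, Set.mem_setOf] at hσ hσ'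
      have h1 := ((HOfin_iff_okH _).1 hσ.2).2
      have h2 := ((HOfin_iff_okH _).1 hσ'.2).2
      exact L2c hP hV hvert hξP hξinj hvv.symm h1 h2
    have hstep : ∑ y ∈ Fintype.piFinset (fun _ : Fin d => Finset.Icc 1 m),
        ((Set.extremePoints ℝ (maxFace P (fun i => (y i : ℝ)))).ncard : ℝ)
        = ∑ σ : Equiv.Perm (Fin d),
            (((m + ((d-1) - jnum σ)).choose d : ℕ) : ℝ) := by
      have hnat : ∑ y ∈ Fintype.piFinset (fun _ : Fin d => Finset.Icc 1 m),
          (Set.extremePoints ℝ (maxFace P (fun i => (y i : ℝ)))).ncard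
          = ∑ σ : Equiv.Perm (Fin d), (m + ((d-1) - jnum σ)).choose d := by
        rw [Finset.sum_congr rfl fun y hy' => hy y (Fintype.mem_piFinset.1 hy')]
        rw [Finset.sum_congr rfl fun y _ => Finset.card_filter _ _]
        rw [Finset.sum_comm]
        refine Finset.sum_congr rfl fun σ _ => ?_
        have hfil : HOfin d m σ (Jf (ξ (vert σ)) σ)
            = (Fintype.piFinset fun _ : Fin d => Finset.Icc 1 m).filter
                (fun y => y ∈ HOfin d m σ (Jf (ξ (vert σ)) σ)) := by
          ext y
          rw [Finset.mem_filter]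
          constructor
          · intro h
            refine ⟨?_, h⟩
            rw [Fintype.mem_piFinset]
            exact (mem_HOfin.1 h).1
          · exact fun h => h.2
        rw [← Finset.card_filter, ← hfil, card_HOfin d m σ _ (Jf_subset _ _)]
      calc ∑ y ∈ Fintype.piFinset (fun _ : Fin d => Finset.Icc 1 m),
          ((Set.extremePoints ℝ (maxFace P (fun i => (y i : ℝ)))).ncard : ℝ)
          = ((∑ y ∈ Fintype.piFinset (fun _ : Fin d => Finset.Icc 1 m),
              (Set.extremePoints ℝ (maxFace P (fun i => (y i : ℝ)))).ncard : ℕ) : ℝ) := by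
            rw [Nat.cast_sum]
        _ = _ := by rw [hnat, Nat.cast_sum]
    rw [hstep, heval, Finset.mul_sum]
    refine Finset.sum_congr rfl fun σ _ => ?_
    have hepn := eval_prod_neg (d := d) m (jnum σ) (hjle σ) hm
    rw [Nat.descFactorial_eq_factorial_mul_choose] at hepn
    have : (-1:ℝ)^d * ((d.factorial : ℝ)⁻¹ *
        ∏ t ∈ Finset.range d, (-(m:ℝ) + ((jnum σ : ℝ) - t)))
        = (d.factorial : ℝ)⁻¹ * ((-1:ℝ)^d *
            ∏ t ∈ Finset.range d, (-(m:ℝ) + ((jnum σ : ℝ) - t))) := by ring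
    rw [this, hepn, Nat.cast_mul]
    field_simp
end
end

section
/- Let h = (I, E) be a hypergraph and P(h) = Σ_{e ∈ E} Δ_e ⊆ R^I its hypergraphic polytope. Define z : 2^I → R by z(T) = #(hyperedges e ∈ E with e ∩ T ≠ ∅) for T ⊆ I. Then z is a submodular function with z(∅) = 0, and P(h) equals the base polytope { x ∈ R^I : Σ_{i∈I} x_i = z(I) and Σ_{i∈T} x_i ≤ z(T) for all T ⊆ I }. In particular, hypergraphic polytopes are generalized permutahedra. -/
open Set Pointwise
open scoped Classical

noncomputable section

/-- The simplex `Δ_e = conv{ b_i : i ∈ e }` of a hyperedge `e`. -/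
def hgSimplex {I : Type*} [Fintype I] [DecidableEq I] (e : Finset I) : Set (I → ℝ) :=
  convexHull ℝ ((fun i => Pi.single i (1 : ℝ)) '' (e : Set I))

/-- The hypergraphic polytope of the hypergraph with hyperedges `edges a`, `a : ι`:
the Minkowski sum `Σ_a Δ_{edges a}`. -/
def hgPolytope {I : Type*} [Fintype I] [DecidableEq I] {ι : Type*} [Fintype ι]
    (edges : ι → Finset I) : Set (I → ℝ) :=
  {x | ∃ f : ι → I → ℝ, (∀ a, f a ∈ hgSimplex (edges a)) ∧ x = ∑ a, f a}

/-- A heading of a hypergraph: a choice of a head `σ e ∈ e` for every hyperedge `e`. -/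
def IsHeading {I : Type*} {ι : Type*} (edges : ι → Finset I) (σ : ι → I) : Prop :=
  ∀ a, σ a ∈ edges a

/-- A heading contains an oriented cycle `e_1, …, e_ℓ` if `σ(e_j) ∈ e_{j+1} \ {σ(e_{j+1})}`
cyclically (indices mod `ℓ`). -/
def HasOrientedCycle {I : Type*} {ι : Type*} (edges : ι → Finset I) (σ : ι → I) : Prop :=
  ∃ (ℓ : ℕ) (a : ℕ → ι), 0 < ℓ ∧
    ∀ j < ℓ, σ (a j) ∈ edges (a ((j + 1) % ℓ)) ∧ σ (a j) ≠ σ (a ((j + 1) % ℓ))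

/-- An acyclic heading: a heading with no oriented cycle. -/
def IsAcyclicHeading {I : Type*} {ι : Type*} (edges : ι → Finset I) (σ : ι → I) : Prop :=
  IsHeading edges σ ∧ ¬ HasOrientedCycle edges σ

/-- The in-degree vector `δ(σ)` of a heading: `δ(σ)_i` is the number of hyperedges with
head `i`. -/
def inDegVec {I : Type*} [DecidableEq I] {ι : Type*} [Fintype ι] (σ : ι → I) : I → ℝ :=
  fun i => ((Finset.univ.filter fun a => σ a = i).card : ℝ)

/-- A coloring `c` of a hypergraph is proper if every hyperedge has a unique maximal node. -/
def IsProperColoring {I : Type*} {ι : Type*} (edges : ι → Finset I) (c : I → ℕ) : Prop :=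
  ∀ a, ∃! i, i ∈ edges a ∧ ∀ j ∈ edges a, c j ≤ c i

/-- A heading `σ` and a coloring `c` are compatible if, for every hyperedge, the head
carries the maximal color of the hyperedge. -/
def Compatible {I : Type*} {ι : Type*} (edges : ι → Finset I) (σ : ι → I) (c : I → ℕ) :
    Prop :=
  ∀ a, ∀ j ∈ edges a, c j ≤ c (σ a)

/-- A submodular set function. -/
def Submodular {I : Type*} [DecidableEq I] (z : Finset I → ℝ) : Prop :=
  ∀ A B : Finset I, z (A ∪ B) + z (A ∩ B) ≤ z A + z B

/-- The base polytope of a set function `z`. -/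
def basePolytope {I : Type*} [Fintype I] (z : Finset I → ℝ) : Set (I → ℝ) :=
  {x | ∑ i, x i = z Finset.univ ∧ ∀ T : Finset I, ∑ i ∈ T, x i ≤ z T}

namespace Stmt8Aux

variable {I : Type*} [Fintype I] [DecidableEq I]

/-- the upper set of `y` at level `y j` -/
def U (y : I → ℝ) (j : I) : Finset I := Finset.univ.filter (fun i => y j ≤ y i)

lemma mem_U {y : I → ℝ} {j i : I} : i ∈ U y j ↔ y j ≤ y i := by simp [U]

lemma hgSimplex_mem {e : Finset I} {x : I → ℝ} (hx : x ∈ hgSimplex e) :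
    (∀ i, 0 ≤ x i) ∧ (∀ i, i ∉ e → x i = 0) ∧ ∑ i, x i = 1 := by
  have hconv : Convex ℝ {x : I → ℝ | (∀ i, 0 ≤ x i) ∧ (∀ i, i ∉ e → x i = 0) ∧ ∑ i, x i = 1} := by
    rintro u ⟨hu1, hu2, hu3⟩ v ⟨hv1, hv2, hv3⟩ p q hp hq hpq
    refine ⟨?_, ?_, ?_⟩
    · intro i
      have h1 := hu1 i; have h2 := hv1 i
      simp only [Pi.add_apply, Pi.smul_apply, smul_eq_mul]
      positivity
    · intro i hi
      simp [hu2 i hi, hv2 i hi]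
    · simp only [Pi.add_apply, Pi.smul_apply, smul_eq_mul]
      rw [Finset.sum_add_distrib, ← Finset.mul_sum, ← Finset.mul_sum, hu3, hv3]
      linarith
  have hgen : (fun i => Pi.single i (1 : ℝ)) '' (e : Set I) ⊆
      {x : I → ℝ | (∀ i, 0 ≤ x i) ∧ (∀ i, i ∉ e → x i = 0) ∧ ∑ i, x i = 1} := by
    rintro _ ⟨i, hi, rfl⟩
    refine ⟨fun j => ?_, fun j hj => ?_, ?_⟩
    · simp only [Pi.single_apply]
      split_ifs <;> norm_num
    · simp only [Pi.single_apply]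
      rw [if_neg]; rintro rfl; exact hj hi
    · simp [Pi.single_apply]
  exact convexHull_min hgen hconv hx

lemma single_mem_hgSimplex {e : Finset I} {i : I} (hi : i ∈ e) :
    Pi.single i (1 : ℝ) ∈ hgSimplex e :=
  subset_convexHull ℝ _ ⟨i, hi, rfl⟩


set_option maxHeartbeats 1000000 in
lemma core : ∀ (n : ℕ) (y : I → ℝ), (Finset.image y Finset.univ).card = n →
    ∀ x x' : I → ℝ, (∑ i, x i = ∑ i, x' i) →
    (∀ j, ∑ i ∈ U y j, x i ≤ ∑ i ∈ U y j, x' i) →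
    evalDir y x ≤ evalDir y x' ∧
      ((∃ j, ∑ i ∈ U y j, x i ≠ ∑ i ∈ U y j, x' i) → evalDir y x < evalDir y x') := by
  intro n
  induction n using Nat.strong_induction_on with
  | _ n ih =>
    intro y hcard x x' hsum hle
    by_cases hn : n ≤ 1
    · -- base case: y is constant (or I is empty)
      rcases isEmpty_or_nonempty I with hI | hI
      · constructor
        · simp [evalDir]
        · rintro ⟨j, -⟩; exact (hI.false j).elim
      · obtain ⟨j₀⟩ := hI
        have h1 : (Finset.image y Finset.univ).card ≤ 1 := hcard ▸ hn
        have hconst : ∀ i j : I, y i = y j := by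
          intro i j
          exact Finset.card_le_one.mp h1 _ (Finset.mem_image_of_mem y (Finset.mem_univ i)) _
            (Finset.mem_image_of_mem y (Finset.mem_univ j))
        have hval : ∀ v : I → ℝ, evalDir y v = y j₀ * ∑ i, v i := by
          intro v
          rw [evalDir, Finset.mul_sum]
          exact Finset.sum_congr rfl fun i _ => by rw [hconst i j₀]
        constructor
        · rw [hval, hval, hsum]
        · rintro ⟨j, hj⟩
          exfalso
          apply hj
          have : U y j = Finset.univ := by
            ext i; simp [mem_U, le_of_eq (hconst j i)]
          rw [this]; exact hsum
    · push_neg at hn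
      have hSne : (Finset.image y Finset.univ).Nonempty := by
        rw [← Finset.card_pos, hcard]; omega
      set S := Finset.image y Finset.univ with hSdef
      set M := S.max' hSne with hMdef
      have hMS : M ∈ S := S.max'_mem hSne
      have hyleM : ∀ i, y i ≤ M := fun i => S.le_max' _ (Finset.mem_image_of_mem y (Finset.mem_univ i))
      have hS'ne : (S.erase M).Nonempty := by
        rw [← Finset.card_pos, Finset.card_erase_of_mem hMS, hcard]; omega
      set m := (S.erase M).max' hS'ne with hmdef
      have hmS' : m ∈ S.erase M := Finset.max'_mem _ hS'ne
      have hmM : m < M :=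
        lt_of_le_of_ne (S.le_max' m (Finset.mem_of_mem_erase hmS')) (Finset.ne_of_mem_erase hmS')
      have htop : ∀ i, y i ≠ M → y i ≤ m := fun i h =>
        Finset.le_max' _ _ (Finset.mem_erase.mpr ⟨h, Finset.mem_image_of_mem y (Finset.mem_univ i)⟩)
      set yh : I → ℝ := fun i => min (y i) m with hyhdef
      have hyhval : ∀ i, (y i = M ∧ yh i = m) ∨ (y i ≤ m ∧ yh i = y i) := by
        intro i
        by_cases h : y i = M
        · exact Or.inl ⟨h, by simp [hyhdef, h, le_of_lt hmM]⟩
        · exact Or.inr ⟨htop i h, by simp [hyhdef, htop i h]⟩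
      have himg : Finset.image yh Finset.univ = S.erase M := by
        apply Finset.Subset.antisymm
        · intro t ht
          obtain ⟨i, -, rfl⟩ := Finset.mem_image.mp ht
          rcases hyhval i with ⟨h1, h2⟩ | ⟨h1, h2⟩
          · rw [h2]; exact hmS'
          · rw [h2]
            exact Finset.mem_erase.mpr ⟨fun hh => absurd (hh ▸ h1) (not_le.mpr hmM),
              Finset.mem_image_of_mem y (Finset.mem_univ i)⟩
        · intro t ht
          obtain ⟨i, -, rfl⟩ := Finset.mem_image.mp (Finset.mem_of_mem_erase ht)
          have h1 : y i ≤ m := htop i (Finset.ne_of_mem_erase ht)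
          exact Finset.mem_image.mpr ⟨i, Finset.mem_univ i, by simp [hyhdef, h1]⟩
      have hcard' : (Finset.image yh Finset.univ).card = n - 1 := by
        rw [himg, Finset.card_erase_of_mem hMS, hcard]
      set top : Finset I := Finset.univ.filter (fun i => y i = M) with htopdef
      have hUtop : ∀ j, y j = M → U y j = top := by
        intro j hj
        ext i
        simp only [mem_U, htopdef, Finset.mem_filter, Finset.mem_univ, true_and, hj]
        exact ⟨fun h => le_antisymm (hyleM i) h, fun h => h.ge⟩
      have hUeq : ∀ j, y j ≠ M → U yh j = U y j := by
        intro j hj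
        have h1 : y j ≤ m := htop j hj
        ext i
        simp only [mem_U, hyhdef, min_eq_left h1, le_min_iff]
        exact ⟨fun h => h.1, fun h => ⟨h, h1⟩⟩
      have hUyh : ∀ j, ∃ j', U yh j = U y j' := by
        intro j
        by_cases hj : y j = M
        · obtain ⟨j', -, hj'⟩ := Finset.mem_image.mp (Finset.mem_of_mem_erase hmS')
          refine ⟨j', ?_⟩
          ext i
          simp only [mem_U, hyhdef, hj, min_eq_right (le_of_lt hmM), le_min_iff, hj']
          exact ⟨fun h => h.1, fun h => ⟨h, le_rfl⟩⟩
        · exact ⟨j, hUeq j hj⟩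
      have hsplit : ∀ v : I → ℝ, evalDir y v = evalDir yh v + (M - m) * ∑ i ∈ top, v i := by
        intro v
        have h1 : ∀ i, y i * v i = yh i * v i + (if y i = M then (M - m) * v i else 0) := by
          intro i
          rcases hyhval i with ⟨ha, hb⟩ | ⟨ha, hb⟩
          · rw [hb, if_pos ha, ha]; ring
          · have hne : y i ≠ M := fun hh => absurd (hh ▸ ha) (not_le.mpr hmM)
            rw [hb, if_neg hne]; ring
        calc evalDir y v = ∑ i, (yh i * v i + (if y i = M then (M - m) * v i else 0)) :=
              Finset.sum_congr rfl fun i _ => h1 i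
          _ = evalDir yh v + ∑ i ∈ top, (M - m) * v i := by
              rw [Finset.sum_add_distrib, htopdef, Finset.sum_filter]; rfl
          _ = evalDir yh v + (M - m) * ∑ i ∈ top, v i := by rw [Finset.mul_sum]
      obtain ⟨hle', hlt'⟩ := ih (n - 1) (by omega) yh hcard' x x' hsum
        (fun j => by obtain ⟨j', hj'⟩ := hUyh j; rw [hj']; exact hle j')
      obtain ⟨jM, -, hjM⟩ := Finset.mem_image.mp hMS
      have htople : ∑ i ∈ top, x i ≤ ∑ i ∈ top, x' i := by
        rw [← hUtop jM hjM]; exact hle jM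
      have hMm : (0:ℝ) ≤ M - m := by linarith
      constructor
      · rw [hsplit x, hsplit x']
        have := mul_le_mul_of_nonneg_left htople hMm
        linarith
      · rintro ⟨j, hj⟩
        rw [hsplit x, hsplit x']
        by_cases hjM' : y j = M
        · have hlt : ∑ i ∈ top, x i < ∑ i ∈ top, x' i := by
            rw [← hUtop j hjM']
            exact lt_of_le_of_ne (hle j) (by rw [hUtop j hjM', ← hUtop j hjM'] at hj; exact hj)
          have := mul_lt_mul_of_pos_left hlt (by linarith : (0:ℝ) < M - m)
          linarith
        · have h2 := hlt' ⟨j, by rw [hUeq j hjM']; exact hj⟩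
          have := mul_le_mul_of_nonneg_left htople hMm
          linarith


variable {ι : Type*} [Fintype ι]

def zf (edges : ι → Finset I) (T : Finset I) : ℝ :=
  ((Finset.univ.filter fun a => (edges a ∩ T).Nonempty).card : ℝ)

lemma zf_eq (edges : ι → Finset I) (T : Finset I) :
    zf edges T = ∑ a, if (edges a ∩ T).Nonempty then (1:ℝ) else 0 := by
  rw [zf, Finset.card_filter]
  push_cast
  rfl

lemma zf_univ (edges : ι → Finset I) (hE : ∀ a, (edges a).Nonempty) :
    zf edges Finset.univ = (Fintype.card ι : ℝ) := by
  rw [zf]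
  congr 2
  rw [Finset.filter_eq_self]
  intro a _
  rw [Finset.inter_univ]
  exact hE a

lemma sum_single_apply (g : ι → I) (T : Finset I) :
    ∑ i ∈ T, (∑ a, Pi.single (g a) (1:ℝ)) i
      = ((Finset.univ.filter fun a => g a ∈ T).card : ℝ) := by
  rw [Finset.card_filter]
  push_cast
  simp only [Finset.sum_apply]
  rw [Finset.sum_comm]
  apply Finset.sum_congr rfl
  intro a _
  simp [Pi.single_apply, Finset.sum_ite_eq' T (g a)]

lemma sum_single_mem {edges : ι → Finset I} {g : ι → I} (hg : ∀ a, g a ∈ edges a) :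
    (∑ a, Pi.single (g a) (1:ℝ)) ∈ hgPolytope edges :=
  ⟨fun a => Pi.single (g a) 1, fun a => single_mem_hgSimplex (hg a), rfl⟩

lemma greedy_exists (edges : ι → Finset I) (hE : ∀ a, (edges a).Nonempty) (y : I → ℝ) :
    ∃ g : ι → I, (∀ a, g a ∈ edges a) ∧
      (∑ i, (∑ a, Pi.single (g a) (1:ℝ)) i = zf edges Finset.univ) ∧
      (∀ j, ∑ i ∈ U y j, (∑ a, Pi.single (g a) (1:ℝ)) i = zf edges (U y j)) := by
  have hch : ∀ a, ∃ i ∈ edges a, ∀ i' ∈ edges a, y i' ≤ y i :=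
    fun a => (edges a).exists_max_image y (hE a)
  choose g hg1 hg2 using hch
  refine ⟨g, hg1, ?_, ?_⟩
  · rw [sum_single_apply g Finset.univ, zf_univ edges hE]
    simp
  · intro j
    rw [sum_single_apply, zf]
    congr 2
    apply Finset.filter_congr
    intro a _
    constructor
    · intro h
      exact ⟨g a, Finset.mem_inter.mpr ⟨hg1 a, h⟩⟩
    · rintro ⟨i, hi⟩
      obtain ⟨hi1, hi2⟩ := Finset.mem_inter.mp hi
      exact mem_U.mpr (le_trans (mem_U.mp hi2) (hg2 a i hi1))


def basePolytope' (z : Finset I → ℝ) : Set (I → ℝ) :=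
  {x | ∑ i, x i = z Finset.univ ∧ ∀ T : Finset I, ∑ i ∈ T, x i ≤ z T}

lemma hg_subset_base (edges : ι → Finset I) (hE : ∀ a, (edges a).Nonempty) :
    hgPolytope edges ⊆ basePolytope' (zf edges) := by
  rintro x ⟨f, hf, rfl⟩
  have hf' := fun a => hgSimplex_mem (hf a)
  have hT : ∀ T : Finset I, ∑ i ∈ T, (∑ a, f a) i = ∑ a, ∑ i ∈ T, f a i := by
    intro T
    simp only [Finset.sum_apply]
    rw [Finset.sum_comm]
  constructor
  · rw [hT Finset.univ, zf_univ edges hE]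
    rw [Finset.sum_congr rfl (fun a _ => (hf' a).2.2)]
    simp
  · intro T
    rw [hT T, zf_eq]
    apply Finset.sum_le_sum
    intro a _
    by_cases h : (edges a ∩ T).Nonempty
    · rw [if_pos h, ← (hf' a).2.2]
      exact Finset.sum_le_sum_of_subset_of_nonneg (Finset.subset_univ T)
        (fun i _ _ => (hf' a).1 i)
    · rw [if_neg h]
      apply le_of_eq
      apply Finset.sum_eq_zero
      intro i hi
      apply (hf' a).2.1
      intro hie
      exact h ⟨i, Finset.mem_inter.mpr ⟨hie, hi⟩⟩

lemma hg_convex (edges : ι → Finset I) : Convex ℝ (hgPolytope edges) := by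
  rintro x ⟨f, hf, rfl⟩ x' ⟨f', hf', rfl⟩ p q hp hq hpq
  refine ⟨fun a => p • f a + q • f' a,
    fun a => (convex_convexHull ℝ _) (hf a) (hf' a) hp hq hpq, ?_⟩
  rw [Finset.smul_sum, Finset.smul_sum, Finset.sum_add_distrib]

lemma hg_isCompact (edges : ι → Finset I) : IsCompact (hgPolytope edges) := by
  have himg : hgPolytope edges =
      (fun f : ι → I → ℝ => ∑ a, f a) '' (Set.univ.pi fun a => hgSimplex (edges a)) := by
    ext x
    constructor
    · rintro ⟨f, hf, rfl⟩
      exact ⟨f, fun a _ => hf a, rfl⟩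
    · rintro ⟨f, hf, rfl⟩
      exact ⟨f, fun a => hf a (Set.mem_univ a), rfl⟩
  rw [himg]
  exact (isCompact_univ_pi fun a =>
      ((edges a).finite_toSet.image _).isCompact_convexHull (𝕜 := ℝ)).image
    (continuous_finset_sum _ fun a _ => continuous_apply a)

set_option synthInstance.maxHeartbeats 400000 in
lemma key_sep (edges : ι → Finset I) (hE : ∀ a, (edges a).Nonempty)
    (Q : Set (I → ℝ)) (hQc : Convex ℝ Q) (hQcl : IsClosed Q)
    (hQgreedy : ∀ y : I → ℝ, ∃ xs ∈ Q, (∑ i, xs i = zf edges Finset.univ) ∧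
      ∀ j, ∑ i ∈ U y j, xs i = zf edges (U y j))
    {x : I → ℝ} (hx : x ∈ basePolytope' (zf edges)) : x ∈ Q := by
  by_contra hxQ
  obtain ⟨l, u, hl, hu⟩ := geometric_hahn_banach_closed_point hQc hQcl hxQ
  set y : I → ℝ := fun i => l (Pi.single i 1) with hydef
  obtain ⟨xs, hxsQ, hs1, hs2⟩ := hQgreedy y
  have h2 : evalDir y x ≤ evalDir y xs :=
    (core _ y rfl x xs (hx.1.trans hs1.symm) (fun j => (hx.2 _).trans_eq (hs2 j).symm)).1
  have hrep : ∀ v : I → ℝ, v = ∑ i, v i • (Pi.single i (1:ℝ) : I → ℝ) := by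
    intro v
    ext j
    simp [Finset.sum_apply, Pi.single_apply, mul_ite]
  have hly : ∀ v : I → ℝ, l v = evalDir y v := by
    intro v
    conv_lhs => rw [hrep v]
    rw [map_sum]
    simp only [map_smul, smul_eq_mul]
    rw [evalDir]
    exact Finset.sum_congr rfl fun i _ => mul_comm _ _
  have h3 : l xs < l x := (hl xs hxsQ).trans hu
  rw [hly x, hly xs] at h3
  linarith

lemma base_subset_hg (edges : ι → Finset I) (hE : ∀ a, (edges a).Nonempty) :
    basePolytope' (zf edges) ⊆ hgPolytope edges := by
  intro x hx
  apply key_sep edges hE _ (hg_convex edges) (hg_isCompact edges).isClosed _ hx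
  intro y
  obtain ⟨g, hg1, hu, hU⟩ := greedy_exists edges hE y
  exact ⟨_, sum_single_mem hg1, hu, hU⟩


lemma maxFace_char (edges : ι → Finset I) (hE : ∀ a, (edges a).Nonempty) (y : I → ℝ) :
    maxFace (hgPolytope edges) y =
      {x | x ∈ hgPolytope edges ∧ ∀ j, ∑ i ∈ U y j, x i = zf edges (U y j)} := by
  obtain ⟨g, hg1, hs1, hs2⟩ := greedy_exists edges hE y
  set xs := ∑ a, (Pi.single (g a) (1:ℝ) : I → ℝ) with hxsdef
  have hxsP : xs ∈ hgPolytope edges := sum_single_mem hg1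
  ext x
  constructor
  · rintro ⟨hxP, hmax⟩
    refine ⟨hxP, fun j => ?_⟩
    by_contra hne
    have hxB := hg_subset_base edges hE hxP
    have hstrict := (core _ y rfl x xs (hxB.1.trans hs1.symm)
        (fun j' => (hxB.2 _).trans_eq (hs2 j').symm)).2 ⟨j, by rw [hs2 j]; exact hne⟩
    exact absurd (hmax xs hxsP) (not_le.mpr hstrict)
  · rintro ⟨hxP, heq⟩
    refine ⟨hxP, fun x' hx' => ?_⟩
    have hx'B := hg_subset_base edges hE hx'
    have hxB := hg_subset_base edges hE hxP
    exact (core _ y rfl x' x (hx'B.1.trans hxB.1.symm)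
      (fun j => (hx'B.2 _).trans_eq (heq j).symm)).1

set_option synthInstance.maxHeartbeats 400000 in
lemma hg_isPolytope (edges : ι → Finset I) (hE : ∀ a, (edges a).Nonempty) :
    IsPolytope (hgPolytope edges) := by
  set V : Finset (I → ℝ) :=
    (Fintype.piFinset edges).image (fun g => ∑ a, (Pi.single (g a) (1:ℝ) : I → ℝ)) with hVdef
  have hVsub : (V : Set (I → ℝ)) ⊆ hgPolytope edges := by
    intro v hv
    obtain ⟨g, hg, rfl⟩ := Finset.mem_image.mp hv
    exact sum_single_mem (fun a => Fintype.mem_piFinset.mp hg a)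
  refine ⟨V, ?_, ?_⟩
  · refine Finset.Nonempty.image ⟨fun a => (hE a).choose, ?_⟩ _
    exact Fintype.mem_piFinset.mpr fun a => (hE a).choose_spec
  · apply Set.Subset.antisymm
    · intro x hx
      apply key_sep edges hE _ (convex_convexHull ℝ _)
        (V.finite_toSet.isClosed_convexHull (𝕜 := ℝ)) _ (hg_subset_base edges hE hx)
      intro y
      obtain ⟨g, hg1, hu, hU⟩ := greedy_exists edges hE y
      refine ⟨_, subset_convexHull ℝ _ ?_, hu, hU⟩
      exact Finset.mem_coe.mpr (Finset.mem_image.mpr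
        ⟨g, Fintype.mem_piFinset.mpr hg1, rfl⟩)
    · exact convexHull_min hVsub (hg_convex edges)

lemma exists_rank (y : I → ℝ) : ∃ w : I → ℕ, ∀ i j, w i ≤ w j ↔ y i ≤ y j := by
  refine ⟨fun i => ((Finset.image y Finset.univ).filter (· ≤ y i)).card, fun i j => ?_⟩
  constructor
  · intro h
    by_contra hc
    push_neg at hc
    have hsub : (Finset.image y Finset.univ).filter (· ≤ y j) ⊆
        (Finset.image y Finset.univ).filter (· ≤ y i) := fun t ht =>
      Finset.mem_filter.mpr ⟨(Finset.mem_filter.mp ht).1,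
        le_trans (Finset.mem_filter.mp ht).2 (le_of_lt hc)⟩
    have hss : (Finset.image y Finset.univ).filter (· ≤ y j) ⊂
        (Finset.image y Finset.univ).filter (· ≤ y i) := by
      refine (Finset.ssubset_iff_of_subset hsub).mpr ⟨y i, ?_, ?_⟩
      · exact Finset.mem_filter.mpr ⟨Finset.mem_image_of_mem y (Finset.mem_univ i), le_rfl⟩
      · intro hmem
        exact absurd (Finset.mem_filter.mp hmem).2 (not_le.mpr hc)
    exact absurd h (not_le.mpr (Finset.card_lt_card hss))
  · intro h
    exact Finset.card_le_card fun t ht => Finset.mem_filter.mpr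
      ⟨(Finset.mem_filter.mp ht).1, le_trans (Finset.mem_filter.mp ht).2 h⟩

lemma hg_genPerm (edges : ι → Finset I) (hE : ∀ a, (edges a).Nonempty) :
    IsGenPerm (hgPolytope edges) := by
  refine ⟨hg_isPolytope edges hE, fun F _ _ => ?_⟩
  refine ⟨{C | C ∈ braidFan I ∧ C ⊆ normalCone (hgPolytope edges) F},
    fun C hC => hC.1, ?_⟩
  apply Set.Subset.antisymm
  · intro y hy
    obtain ⟨w, hw⟩ := exists_rank y
    refine Set.mem_sUnion.mpr ⟨braidCone w, ⟨⟨w, rfl⟩, ?_⟩, fun i j hij => (hw i j).mp hij⟩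
    intro y' hy'
    have hmono : ∀ i j, y i ≤ y j → y' i ≤ y' j := fun i j h => hy' i j ((hw i j).mpr h)
    intro x hxF
    have hx := hy hxF
    rw [maxFace_char edges hE y] at hx
    rw [maxFace_char edges hE y']
    refine ⟨hx.1, fun j => ?_⟩
    have hA : (U y' j).Nonempty := ⟨j, mem_U.mpr le_rfl⟩
    obtain ⟨j', hj'1, hj'2⟩ := Finset.exists_min_image (U y' j) y hA
    have hUU : U y' j = U y j' := by
      apply Finset.Subset.antisymm
      · intro i hi
        exact mem_U.mpr (hj'2 i hi)
      · intro i hi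
        exact mem_U.mpr (le_trans (mem_U.mp hj'1) (hmono _ _ (mem_U.mp hi)))
    rw [hUU]
    exact hx.2 j'
  · exact Set.sUnion_subset fun C hC => hC.2

lemma hg_submodular (edges : ι → Finset I) :
    Submodular (fun T : Finset I =>
      ((Finset.univ.filter fun a : ι => (edges a ∩ T).Nonempty).card : ℝ)) := by
  intro A B
  show zf edges (A ∪ B) + zf edges (A ∩ B) ≤ zf edges A + zf edges B
  rw [zf_eq, zf_eq, zf_eq, zf_eq, ← Finset.sum_add_distrib, ← Finset.sum_add_distrib]
  apply Finset.sum_le_sum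
  intro a _
  have hu : (edges a ∩ (A ∪ B)).Nonempty ↔
      ((edges a ∩ A).Nonempty ∨ (edges a ∩ B).Nonempty) := by
    rw [Finset.inter_union_distrib_left]
    constructor
    · rintro ⟨i, hi⟩
      rcases Finset.mem_union.mp hi with h | h
      · exact Or.inl ⟨i, h⟩
      · exact Or.inr ⟨i, h⟩
    · rintro (⟨i, hi⟩ | ⟨i, hi⟩)
      · exact ⟨i, Finset.mem_union_left _ hi⟩
      · exact ⟨i, Finset.mem_union_right _ hi⟩
  have hi : (edges a ∩ (A ∩ B)).Nonempty →
      ((edges a ∩ A).Nonempty ∧ (edges a ∩ B).Nonempty) := by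
    rintro ⟨i, hi⟩
    simp only [Finset.mem_inter] at hi
    exact ⟨⟨i, Finset.mem_inter.mpr ⟨hi.1, hi.2.1⟩⟩, ⟨i, Finset.mem_inter.mpr ⟨hi.1, hi.2.2⟩⟩⟩
  split_ifs with h1 h2 h3 h4 <;> simp_all <;> norm_num <;> tauto

end Stmt8Aux

/-- For a hypergraph `h = (I, E)` with hypergraphic polytope
`P(h) = Σ_{e ∈ E} Δ_e`, the function `z(T) = #(hyperedges meeting T)` is submodular with
`z(∅) = 0`, the hypergraphic polytope equals the base polytope of `z`, and in particular
`P(h)` is a generalized permutahedron. -/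
theorem stmt8 {I : Type*} [Fintype I] [DecidableEq I] {ι : Type*} [Fintype ι]
    (edges : ι → Finset I) (hE : ∀ a, (edges a).Nonempty) :
    Submodular (fun T : Finset I =>
        ((Finset.univ.filter fun a : ι => (edges a ∩ T).Nonempty).card : ℝ)) ∧
    ((Finset.univ.filter fun a : ι => (edges a ∩ (∅ : Finset I)).Nonempty).card : ℝ) = 0 ∧
    hgPolytope edges = basePolytope (fun T : Finset I =>
        ((Finset.univ.filter fun a : ι => (edges a ∩ T).Nonempty).card : ℝ)) ∧
    IsGenPerm (hgPolytope edges) := by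
  constructor
  · exact Stmt8Aux.hg_submodular edges
  constructor
  · simp
  constructor
  · exact Set.Subset.antisymm (Stmt8Aux.hg_subset_base edges hE) (Stmt8Aux.base_subset_hg edges hE)
  · exact Stmt8Aux.hg_genPerm edges hE
end
end

section
/- Let h = (I, E) be a hypergraph. The hypergraphic polytope P(h) = Σ_{e ∈ E} Δ_e satisfies P(h) = conv{ δ(σ) ∈ R^I : σ an acyclic heading of h }, where δ(σ)_i = #{ e ∈ E : σ(e) = i } is the in-degree vector of the heading σ. Moreover, δ(σ) is a vertex of P(h) if and only if the heading σ is acyclic. -/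
open Set Pointwise
open scoped Classical

noncomputable section

section Aux

variable {I : Type*} [Fintype I] [DecidableEq I] {ι : Type*} [Fintype ι]

lemma inDegVec_eq_sum (σ : ι → I) : inDegVec σ = ∑ a, Pi.single (σ a) (1:ℝ) := by
  funext i
  simp only [inDegVec, Finset.sum_apply, Pi.single_apply, Finset.card_filter]
  push_cast
  refine Finset.sum_congr rfl fun a _ => ?_
  by_cases h : σ a = i
  · simp [h]
  · simp [h, show ¬ i = σ a from fun hh => h hh.symm]

lemma single_mem_simplex {e : Finset I} {i : I} (hi : i ∈ e) :
    Pi.single i (1:ℝ) ∈ hgSimplex e :=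
  subset_convexHull _ _ ⟨i, hi, rfl⟩

lemma heading_mem {edges : ι → Finset I} {σ : ι → I} (hσ : IsHeading edges σ) :
    inDegVec σ ∈ hgPolytope edges :=
  ⟨fun a => Pi.single (σ a) 1, fun a => single_mem_simplex (hσ a), inDegVec_eq_sum σ⟩

lemma convex_hgPolytope (edges : ι → Finset I) : Convex ℝ (hgPolytope edges) := by
  rintro x ⟨f, hf, rfl⟩ y ⟨g, hg, rfl⟩ p q hp hq hpq
  refine ⟨fun a => p • f a + q • g a, fun a => ?_, ?_⟩
  · exact (convex_convexHull ℝ _) (hf a) (hg a) hp hq hpq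
  · rw [Finset.smul_sum, Finset.smul_sum, ← Finset.sum_add_distrib]

def headingPoints (edges : ι → Finset I) : Set (I → ℝ) :=
  {x | ∃ τ : ι → I, IsHeading edges τ ∧ x = inDegVec τ}

lemma headingPoints_finite (edges : ι → Finset I) : (headingPoints edges).Finite := by
  apply (Set.finite_range (fun τ : ι → I => inDegVec τ)).subset
  rintro x ⟨τ, _, rfl⟩
  exact ⟨τ, rfl⟩

lemma sum_mem_conv (edges : ι → Finset I) (hE : ∀ a, (edges a).Nonempty)
    (s : Finset ι) (f : ι → I → ℝ) (hf : ∀ a ∈ s, f a ∈ hgSimplex (edges a)) :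
    ∑ a ∈ s, f a ∈ convexHull ℝ
      {x : I → ℝ | ∃ τ : ι → I, IsHeading edges τ ∧ x = ∑ a ∈ s, Pi.single (τ a) (1:ℝ)} := by
  classical
  induction s using Finset.induction_on with
  | empty =>
      apply subset_convexHull
      exact ⟨fun a => (hE a).choose, fun a => (hE a).choose_spec, by simp⟩
  | insert _ _ ha ih =>
      rename_i b s
      rw [Finset.sum_insert ha]
      have h1 : f b ∈ hgSimplex (edges b) := hf b (Finset.mem_insert_self b s)
      have h2 := ih (fun a haa => hf a (Finset.mem_insert_of_mem haa))
      have hadd : f b + ∑ a ∈ s, f a ∈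
          convexHull ℝ ((fun i => Pi.single i (1:ℝ)) '' (edges b : Set I)) +
          convexHull ℝ {x : I → ℝ | ∃ τ : ι → I, IsHeading edges τ ∧
            x = ∑ a ∈ s, Pi.single (τ a) (1:ℝ)} :=
        Set.add_mem_add h1 h2
      rw [← convexHull_add] at hadd
      refine convexHull_mono ?_ hadd
      rintro z ⟨u, hu, v, hv, rfl⟩
      obtain ⟨i, hi, rfl⟩ := hu
      obtain ⟨τ, hτ, rfl⟩ := hv
      refine ⟨Function.update τ b i, ?_, ?_⟩
      · intro a
        by_cases hab : a = b
        · subst hab; simpa using hi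
        · simpa [Function.update_of_ne hab] using hτ a
      · have hss : ∑ a ∈ s, (Pi.single (Function.update τ b i a) (1:ℝ) : I → ℝ)
            = ∑ a ∈ s, (Pi.single (τ a) (1:ℝ) : I → ℝ) := by
          refine Finset.sum_congr rfl fun a haa => ?_
          have hab : a ≠ b := fun h => ha (h ▸ haa)
          rw [Function.update_of_ne hab]
        rw [Finset.sum_insert ha, Function.update_self, hss]

lemma hgPolytope_eq_convexHull (edges : ι → Finset I) (hE : ∀ a, (edges a).Nonempty) :
    hgPolytope edges = convexHull ℝ (headingPoints edges) := by
  apply Set.Subset.antisymm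
  · rintro x ⟨f, hf, rfl⟩
    have := sum_mem_conv edges hE Finset.univ f (fun a _ => hf a)
    convert this using 2
    ext z
    simp only [headingPoints, Set.mem_setOf_eq]
    constructor
    · rintro ⟨τ, hτ, rfl⟩; exact ⟨τ, hτ, inDegVec_eq_sum τ⟩
    · rintro ⟨τ, hτ, rfl⟩; exact ⟨τ, hτ, (inDegVec_eq_sum τ).symm⟩
  · apply convexHull_min
    · rintro x ⟨τ, hτ, rfl⟩
      exact heading_mem hτ
    · exact convex_hgPolytope edges

end Aux

section Cyc

variable {I : Type*} [Fintype I] [DecidableEq I] {ι : Type*} [Fintype ι]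

lemma transGen_seq {α : Type*} {r : α → α → Prop} {x y : α} (h : Relation.TransGen r x y) :
    ∃ (n : ℕ) (f : ℕ → α), 0 < n ∧ f 0 = x ∧ f n = y ∧ ∀ m < n, r (f m) (f (m + 1)) := by
  induction h with
  | single h =>
      rename_i b
      exact ⟨1, fun m => if m = 0 then x else b, Nat.one_pos, by simp, by simp,
        fun m hm => by interval_cases m; simpa using h⟩
  | tail hab h ih =>
      rename_i b c
      obtain ⟨n, f, hn, h0, hnb, hstep⟩ := ih
      refine ⟨n + 1, fun m => if m ≤ n then f m else c, Nat.succ_pos n, by simp [h0], by simp, ?_⟩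
      intro m hm
      rcases Nat.lt_or_ge m n with hmn | hmn
      · have h1 : m ≤ n := hmn.le
        have h2 : m + 1 ≤ n := hmn
        simpa [h1, h2] using hstep m hmn
      · have hmn' : m = n := by omega
        subst hmn'
        simpa [hnb] using h

lemma transGen_irrefl {edges : ι → Finset I} {σ : ι → I}
    (hc : ¬ HasOrientedCycle edges σ) (i : I) :
    ¬ Relation.TransGen (fun i k => i ≠ k ∧ ∃ a, σ a = k ∧ i ∈ edges a) i i := by
  intro h
  obtain ⟨n, f, hn, h0, hni, hstep⟩ := transGen_seq h
  have hw : ∀ m, m < n → ∃ a, σ a = f (m + 1) ∧ f m ∈ edges a :=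
    fun m hm => (hstep m hm).2
  obtain ⟨a0, -, -⟩ := hw 0 hn
  have : Nonempty ι := ⟨a0⟩
  choose! e he1 he2 using hw
  apply hc
  refine ⟨n, e, hn, fun j hj => ?_⟩
  rcases Nat.lt_or_ge (j + 1) n with hj1 | hj1
  · have hmod : (j + 1) % n = j + 1 := Nat.mod_eq_of_lt hj1
    rw [hmod, he1 j hj, he1 (j + 1) hj1]
    exact ⟨he2 (j + 1) hj1, (hstep (j + 1) hj1).1⟩
  · have hj1' : j + 1 = n := by omega
    have hmod : (j + 1) % n = 0 := by rw [hj1']; exact Nat.mod_self n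
    rw [hmod, he1 j hj, he1 0 hn, hj1', hni, ← h0]
    exact ⟨he2 0 hn, (hstep 0 hn).1⟩

lemma cycle_min {edges : ι → Finset I} {σ : ι → I} (h : HasOrientedCycle edges σ) :
    ∃ (ℓ : ℕ) (a : ℕ → ι), 0 < ℓ ∧
      (∀ j < ℓ, σ (a j) ∈ edges (a ((j + 1) % ℓ)) ∧ σ (a j) ≠ σ (a ((j + 1) % ℓ))) ∧
      ∀ j k, j < ℓ → k < ℓ → a j = a k → j = k := by
  classical
  set P : ℕ → Prop := fun n => ∃ a : ℕ → ι, 0 < n ∧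
    ∀ j < n, σ (a j) ∈ edges (a ((j + 1) % n)) ∧ σ (a j) ≠ σ (a ((j + 1) % n)) with hP
  have hex : ∃ n, P n := by
    obtain ⟨ℓ, a, h1, h2⟩ := h
    exact ⟨ℓ, a, h1, h2⟩
  set ℓ := Nat.find hex with hℓdef
  obtain ⟨a, hℓ, hcond⟩ : P ℓ := Nat.find_spec hex
  refine ⟨ℓ, a, hℓ, hcond, ?_⟩
  by_contra hni
  push_neg at hni
  obtain ⟨j, k, hjℓ, hkℓ, hajk, hjk⟩ := hni
  -- wlog j < k
  wlog hlt : j < k generalizing j k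
  · exact this k j hkℓ hjℓ hajk.symm (Ne.symm hjk) (by omega)
  have hPL : P (k - j) := by
    refine ⟨fun m => a (j + m), by omega, ?_⟩
    intro m hm
    show σ (a (j + m)) ∈ edges (a (j + (m + 1) % (k - j))) ∧
      σ (a (j + m)) ≠ σ (a (j + (m + 1) % (k - j)))
    rcases Nat.lt_or_ge (m + 1) (k - j) with hm1 | hm1
    · have hmod : (m + 1) % (k - j) = m + 1 := Nat.mod_eq_of_lt hm1
      have h1 : j + m < ℓ := by omega
      have hmod2 : (j + m + 1) % ℓ = j + m + 1 := Nat.mod_eq_of_lt (by omega)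
      have := hcond (j + m) h1
      rw [hmod2] at this
      rw [hmod]
      have harg : j + (m + 1) = j + m + 1 := by omega
      rw [harg]
      exact this
      
    · have hm1' : m + 1 = k - j := by omega
      have hmod : (m + 1) % (k - j) = 0 := by rw [hm1']; exact Nat.mod_self _
      have h1 : j + m = k - 1 := by omega
      have h2 : k - 1 < ℓ := by omega
      have hmod2 : (k - 1 + 1) % ℓ = k := by
        have : k - 1 + 1 = k := by omega
        rw [this]; exact Nat.mod_eq_of_lt hkℓ
      have := hcond (k - 1) h2
      rw [hmod2] at this
      rw [hmod, h1]
      simpa [← hajk] using this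
      
  have := Nat.find_min hex (m := k - j) (by omega)
  exact this hPL

lemma cycle_two_le {edges : ι → Finset I} {σ : ι → I} {ℓ : ℕ} {a : ℕ → ι}
    (hℓ : 0 < ℓ)
    (hcond : ∀ j < ℓ, σ (a j) ∈ edges (a ((j + 1) % ℓ)) ∧ σ (a j) ≠ σ (a ((j + 1) % ℓ))) :
    2 ≤ ℓ := by
  by_contra hl
  have hℓ1 : ℓ = 1 := by omega
  have := (hcond 0 hℓ).2
  rw [hℓ1] at this
  simp at this

end Cyc

section NotExtreme

variable {I : Type*} [Fintype I] [DecidableEq I] {ι : Type*} [Fintype ι]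

lemma not_extreme {edges : ι → Finset I} {σ : ι → I} (hσ : IsHeading edges σ)
    (hc : HasOrientedCycle edges σ) :
    inDegVec σ ∉ Set.extremePoints ℝ (hgPolytope edges) := by
  classical
  obtain ⟨ℓ, a, hℓ, hcond, hinj⟩ := cycle_min hc
  have hℓ2 : 2 ≤ ℓ := cycle_two_le hℓ hcond
  have h1mod : 1 % ℓ = 1 := Nat.mod_eq_of_lt (by omega)
  have h01 : σ (a 0) ≠ σ (a 1) := by
    have := (hcond 0 hℓ).2; rwa [h1mod] at this
  have h0mem : σ (a 0) ∈ edges (a 1) := by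
    have := (hcond 0 hℓ).1; rwa [h1mod] at this
  set pred : ℕ → ℕ := fun k => if k = 0 then ℓ - 1 else k - 1 with hpred
  have hpred_lt : ∀ k, k < ℓ → pred k < ℓ := by
    intro k hk; simp only [hpred]; split <;> omega
  have hpred_succ : ∀ k, k < ℓ → (pred k + 1) % ℓ = k := by
    intro k hk
    simp only [hpred]
    split
    · rename_i h; subst h
      have h2 : ℓ - 1 + 1 = ℓ := by omega
      rw [h2, Nat.mod_self]
    · rename_i h
      have h2 : k - 1 + 1 = k := by omega
      rw [h2, Nat.mod_eq_of_lt hk]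
  have hpred1 : pred 1 = 0 := by simp [hpred]
  set τ₁ := Function.update σ (a 1) (σ (a 0)) with hτ₁def
  have hτ₁ : IsHeading edges τ₁ := by
    intro b
    by_cases hb : b = a 1
    · subst hb; rw [hτ₁def, Function.update_self]; exact h0mem
    · rw [hτ₁def, Function.update_of_ne hb]; exact hσ b
  set τ₂ : ι → I := fun b =>
    if h : ∃ k, (k < ℓ ∧ k ≠ 1) ∧ a k = b then σ (a (pred h.choose)) else σ b with hτ₂def
  have hτ₂a : ∀ k, k < ℓ → k ≠ 1 → τ₂ (a k) = σ (a (pred k)) := by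
    intro k hk hk1
    have hex : ∃ k', (k' < ℓ ∧ k' ≠ 1) ∧ a k' = a k := ⟨k, ⟨hk, hk1⟩, rfl⟩
    have hch := hex.choose_spec
    have heq : hex.choose = k := hinj _ _ hch.1.1 hk hch.2
    show (if h : ∃ k', (k' < ℓ ∧ k' ≠ 1) ∧ a k' = a k then σ (a (pred h.choose))
      else σ (a k)) = σ (a (pred k))
    rw [dif_pos hex, heq]
  have hτ₂off : ∀ b, (¬ ∃ k, (k < ℓ ∧ k ≠ 1) ∧ a k = b) → τ₂ b = σ b := by
    intro b hb
    show (if h : ∃ k, (k < ℓ ∧ k ≠ 1) ∧ a k = b then σ (a (pred h.choose)) else σ b) = σ b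
    rw [dif_neg hb]
  have hτ₂ : IsHeading edges τ₂ := by
    intro b
    by_cases hb : ∃ k, (k < ℓ ∧ k ≠ 1) ∧ a k = b
    · obtain ⟨k, ⟨hk, hk1⟩, rfl⟩ := hb
      rw [hτ₂a k hk hk1]
      have := (hcond (pred k) (hpred_lt k hk)).1
      rwa [hpred_succ k hk] at this
    · rw [hτ₂off b hb]; exact hσ b
  -- in-degree computations
  have hδ1 : inDegVec τ₁ = inDegVec σ + Pi.single (σ (a 0)) 1 - Pi.single (σ (a 1)) 1 := by
    rw [inDegVec_eq_sum, inDegVec_eq_sum]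
    have hfun : (fun b => (Pi.single (τ₁ b) (1:ℝ) : I → ℝ)) =
        Function.update (fun b => (Pi.single (σ b) (1:ℝ) : I → ℝ)) (a 1)
          (Pi.single (σ (a 0)) (1:ℝ)) := by
      funext b
      by_cases hb : b = a 1
      · subst hb; rw [hτ₁def]; simp
      · rw [hτ₁def, Function.update_of_ne hb, Function.update_of_ne hb]
    have h1 : ∑ b, (Pi.single (τ₁ b) (1:ℝ) : I → ℝ) =
        ∑ b, Function.update (fun b => (Pi.single (σ b) (1:ℝ) : I → ℝ)) (a 1)
          (Pi.single (σ (a 0)) (1:ℝ)) b := by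
      exact Finset.sum_congr rfl fun b _ => congrFun hfun b
    rw [h1, Finset.sum_update_of_mem (Finset.mem_univ (a 1))]
    rw [Finset.sdiff_singleton_eq_erase, Finset.sum_erase_eq_sub (Finset.mem_univ (a 1))]
    abel
  have hT : ∀ b, b ∉ Finset.image a ((Finset.range ℓ).erase 1) → τ₂ b = σ b := by
    intro b hb
    apply hτ₂off
    rintro ⟨k, ⟨hk, hk1⟩, rfl⟩
    exact hb (Finset.mem_image.2 ⟨k, Finset.mem_erase.2 ⟨hk1, Finset.mem_range.2 hk⟩, rfl⟩)
  have hδ2 : inDegVec τ₂ = inDegVec σ + Pi.single (σ (a 1)) 1 - Pi.single (σ (a 0)) 1 := by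
    have hzero : ∀ b ∈ Finset.univ, b ∉ Finset.image a ((Finset.range ℓ).erase 1) →
        ((Pi.single (τ₂ b) (1:ℝ) : I → ℝ) - Pi.single (σ b) 1) = 0 := by
      intro b _ hb; rw [hT b hb, sub_self]
    have e1 : ∑ b ∈ Finset.image a ((Finset.range ℓ).erase 1),
        ((Pi.single (τ₂ b) (1:ℝ) : I → ℝ) - Pi.single (σ b) 1) =
        ∑ b, ((Pi.single (τ₂ b) (1:ℝ) : I → ℝ) - Pi.single (σ b) 1) :=
      Finset.sum_subset (Finset.subset_univ _) hzero
    have hinj' : ∀ x ∈ (Finset.range ℓ).erase 1, ∀ y ∈ (Finset.range ℓ).erase 1,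
        a x = a y → x = y := by
      intro x hx y hy hxy
      exact hinj x y (Finset.mem_range.1 (Finset.mem_erase.1 hx).2)
        (Finset.mem_range.1 (Finset.mem_erase.1 hy).2) hxy
    have e2 : ∑ b ∈ Finset.image a ((Finset.range ℓ).erase 1),
        ((Pi.single (τ₂ b) (1:ℝ) : I → ℝ) - Pi.single (σ b) 1) =
        ∑ k ∈ (Finset.range ℓ).erase 1,
          ((Pi.single (σ (a (pred k))) (1:ℝ) : I → ℝ) - Pi.single (σ (a k)) 1) := by
      rw [Finset.sum_image hinj']
      refine Finset.sum_congr rfl fun k hk => ?_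
      obtain ⟨hk1, hkr⟩ := Finset.mem_erase.1 hk
      rw [hτ₂a k (Finset.mem_range.1 hkr) hk1]
    have hre : ∑ k ∈ Finset.range ℓ, (Pi.single (σ (a (pred k))) (1:ℝ) : I → ℝ) =
        ∑ k ∈ Finset.range ℓ, (Pi.single (σ (a k)) (1:ℝ) : I → ℝ) := by
      refine Finset.sum_nbij' (i := fun k => pred k)
        (j := fun k => if k = ℓ - 1 then 0 else k + 1) ?_ ?_ ?_ ?_ ?_
      · intro k hk; exact Finset.mem_range.2 (hpred_lt k (Finset.mem_range.1 hk))
      · intro k hk; split <;>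
          · refine Finset.mem_range.2 ?_; have := Finset.mem_range.1 hk; omega
      · intro k hk; have := Finset.mem_range.1 hk; simp only [hpred]; split <;> split <;> omega
      · intro k hk; have := Finset.mem_range.1 hk; simp only [hpred]; split <;> split <;> omega
      · intro k _; rfl
    have e3 : ∑ k ∈ (Finset.range ℓ).erase 1,
          ((Pi.single (σ (a (pred k))) (1:ℝ) : I → ℝ) - Pi.single (σ (a k)) 1) =
        Pi.single (σ (a 1)) 1 - Pi.single (σ (a 0)) 1 := by
      have h1r : (1 : ℕ) ∈ Finset.range ℓ := Finset.mem_range.2 (by omega)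
      rw [Finset.sum_erase_eq_sub h1r, Finset.sum_sub_distrib, hre, hpred1]
      abel
    have e4 : inDegVec τ₂ - inDegVec σ = Pi.single (σ (a 1)) 1 - Pi.single (σ (a 0)) 1 := by
      rw [inDegVec_eq_sum, inDegVec_eq_sum, ← Finset.sum_sub_distrib, ← e1, e2, e3]
    have := e4
    rw [sub_eq_iff_eq_add] at this
    rw [this]; abel
  -- conclude
  intro hext
  obtain ⟨-, hext2⟩ := hext
  have hmid : inDegVec σ ∈ openSegment ℝ (inDegVec τ₁) (inDegVec τ₂) := by
    refine ⟨1/2, 1/2, by norm_num, by norm_num, by norm_num, ?_⟩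
    rw [hδ1, hδ2]
    funext i
    simp only [Pi.add_apply, Pi.sub_apply, Pi.smul_apply, smul_eq_mul]
    ring
  have := (hext2 (heading_mem hτ₁) (heading_mem hτ₂) hmid)
  have heq : inDegVec σ + Pi.single (σ (a 0)) 1 - Pi.single (σ (a 1)) 1 = inDegVec σ := by
    rw [← hδ1, this]
  have heq2 : (Pi.single (σ (a 0)) (1:ℝ) : I → ℝ) = Pi.single (σ (a 1)) 1 := by
    have := congrArg (fun z => z - inDegVec σ + Pi.single (σ (a 1)) 1) heq
    simpa [sub_eq_iff_eq_add, add_comm, add_sub_cancel] using by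
      calc (Pi.single (σ (a 0)) (1:ℝ) : I → ℝ)
          = inDegVec σ + Pi.single (σ (a 0)) 1 - Pi.single (σ (a 1)) 1 - inDegVec σ +
            Pi.single (σ (a 1)) 1 := by abel
        _ = inDegVec σ - inDegVec σ + Pi.single (σ (a 1)) 1 := by rw [heq]
        _ = Pi.single (σ (a 1)) 1 := by abel
  have hval := congrFun heq2 (σ (a 0))
  rw [Pi.single_apply, Pi.single_apply, if_pos rfl, if_neg h01] at hval
  exact one_ne_zero hval

end NotExtreme

section Extreme

variable {I : Type*} [Fintype I] [DecidableEq I] {ι : Type*} [Fintype ι]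

lemma evalDir_inDegVec (y : I → ℝ) (τ : ι → I) :
    evalDir y (inDegVec τ) = ∑ a, y (τ a) := by
  rw [inDegVec_eq_sum, evalDir]
  have h1 : ∀ i, y i * (∑ a, (Pi.single (τ a) (1:ℝ) : I → ℝ)) i
      = ∑ a, y i * (Pi.single (τ a) (1:ℝ) : I → ℝ) i := by
    intro i; rw [Finset.sum_apply, Finset.mul_sum]
  rw [Finset.sum_congr rfl fun i _ => h1 i, Finset.sum_comm]
  refine Finset.sum_congr rfl fun a _ => ?_
  simp [Pi.single_apply, mul_ite]

lemma evalDir_smul_add (y : I → ℝ) (t s : ℝ) (x1 x2 : I → ℝ) :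
    evalDir y (t • x1 + s • x2) = t * evalDir y x1 + s * evalDir y x2 := by
  simp only [evalDir, Pi.add_apply, Pi.smul_apply, smul_eq_mul, mul_add,
    Finset.sum_add_distrib, Finset.mul_sum]
  congr 1 <;> exact Finset.sum_congr rfl fun i _ => by ring

lemma evalDir_sum_smul {γ : Type*} (y : I → ℝ) (s : Finset γ) (w : γ → ℝ) (v : γ → I → ℝ) :
    evalDir y (∑ g ∈ s, w g • v g) = ∑ g ∈ s, w g * evalDir y (v g) := by
  simp only [evalDir, Finset.sum_apply, Pi.smul_apply, smul_eq_mul, Finset.mul_sum]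
  rw [Finset.sum_comm]
  refine Finset.sum_congr rfl fun g _ => Finset.sum_congr rfl fun i _ => by ring

lemma extreme_of_acyclic {edges : ι → Finset I} {σ : ι → I}
    (hE : ∀ a, (edges a).Nonempty) (hσ : IsAcyclicHeading edges σ) :
    inDegVec σ ∈ Set.extremePoints ℝ (hgPolytope edges) := by
  classical
  obtain ⟨hh, hcyc⟩ := hσ
  set R : I → I → Prop := fun i k => i ≠ k ∧ ∃ a, σ a = k ∧ i ∈ edges a with hR
  have hirr := transGen_irrefl (edges := edges) hcyc
  set c : I → ℕ := fun i => (Finset.univ.filter fun j => Relation.TransGen R j i).card with hc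
  have hmono : ∀ i k, R i k → c i < c k := by
    intro i k hik
    apply Finset.card_lt_card
    have hsub : (Finset.univ.filter fun j => Relation.TransGen R j i) ⊆
        (Finset.univ.filter fun j => Relation.TransGen R j k) := by
      intro j hj
      exact Finset.mem_filter.2 ⟨Finset.mem_univ j,
        Relation.TransGen.tail (Finset.mem_filter.1 hj).2 hik⟩
    refine (Finset.ssubset_iff_of_subset hsub).2
      ⟨i, Finset.mem_filter.2 ⟨Finset.mem_univ i, Relation.TransGen.single hik⟩, fun hmem => ?_⟩
    exact hirr i (Finset.mem_filter.1 hmem).2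
  set y : I → ℝ := fun i => (c i : ℝ) with hy
  have hle : ∀ τ : ι → I, IsHeading edges τ → ∀ a, y (τ a) ≤ y (σ a) := by
    intro τ hτ a
    by_cases h : τ a = σ a
    · rw [h]
    · have hRa : R (τ a) (σ a) := ⟨h, a, rfl, hτ a⟩
      have := hmono _ _ hRa
      simp only [hy]
      exact_mod_cast this.le
  set V : Finset (I → ℝ) := Finset.image (fun τ : ι → I => inDegVec τ)
    (Finset.univ.filter fun τ => IsHeading edges τ) with hV
  have hVset : (V : Set (I → ℝ)) = headingPoints edges := by
    ext x
    simp only [hV, Finset.coe_image, Set.mem_image, Finset.mem_coe, Finset.mem_filter,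
      Finset.coe_filter, Set.mem_setOf_eq, headingPoints, Finset.mem_univ, true_and]
    constructor
    · rintro ⟨τ, hτ, rfl⟩; exact ⟨τ, hτ, rfl⟩
    · rintro ⟨τ, hτ, rfl⟩; exact ⟨τ, hτ, rfl⟩
  have hPconv : hgPolytope edges = convexHull ℝ (V : Set (I → ℝ)) := by
    rw [hgPolytope_eq_convexHull edges hE, hVset]
  have hVle : ∀ v ∈ V, evalDir y v ≤ evalDir y (inDegVec σ) := by
    intro v hv
    obtain ⟨τ, hτf, rfl⟩ := Finset.mem_image.1 hv
    have hτ : IsHeading edges τ := (Finset.mem_filter.1 hτf).2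
    rw [evalDir_inDegVec, evalDir_inDegVec]
    exact Finset.sum_le_sum fun a _ => hle τ hτ a
  have hVlt : ∀ v ∈ V, v ≠ inDegVec σ → evalDir y v < evalDir y (inDegVec σ) := by
    intro v hv hne
    obtain ⟨τ, hτf, rfl⟩ := Finset.mem_image.1 hv
    have hτ : IsHeading edges τ := (Finset.mem_filter.1 hτf).2
    have hτσ : τ ≠ σ := fun h => hne (by rw [h])
    rw [evalDir_inDegVec, evalDir_inDegVec]
    obtain ⟨a0, ha0⟩ := Function.ne_iff.1 hτσ
    refine Finset.sum_lt_sum (fun a _ => hle τ hτ a) ⟨a0, Finset.mem_univ a0, ?_⟩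
    have hRa : R (τ a0) (σ a0) := ⟨ha0, a0, rfl, hτ a0⟩
    have := hmono _ _ hRa
    simp only [hy]
    exact_mod_cast this
  have hmax : ∀ z ∈ hgPolytope edges, evalDir y z ≤ evalDir y (inDegVec σ) ∧
      (evalDir y z = evalDir y (inDegVec σ) → z = inDegVec σ) := by
    intro z hz
    rw [hPconv, Finset.convexHull_eq] at hz
    obtain ⟨w, hw0, hw1, hwz⟩ := hz
    rw [Finset.centerMass_eq_of_sum_1 _ _ hw1] at hwz
    simp only [id] at hwz
    subst hwz
    have hboundle : ∑ v ∈ V, w v * evalDir y v ≤ evalDir y (inDegVec σ) := by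
      calc ∑ v ∈ V, w v * evalDir y v ≤ ∑ v ∈ V, w v * evalDir y (inDegVec σ) :=
            Finset.sum_le_sum fun v hv => mul_le_mul_of_nonneg_left (hVle v hv) (hw0 v hv)
        _ = evalDir y (inDegVec σ) := by rw [← Finset.sum_mul, hw1, one_mul]
    constructor
    · rw [evalDir_sum_smul]; exact hboundle
    · intro heq
      have hall : ∀ v ∈ V, w v ≠ 0 → v = inDegVec σ := by
        by_contra hcon
        push_neg at hcon
        obtain ⟨v0, hv0, hw0v, hvne⟩ := hcon
        have hlt := hVlt v0 hv0 hvne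
        have hpos : 0 < w v0 := lt_of_le_of_ne (hw0 v0 hv0) (Ne.symm hw0v)
        have hstrict : ∑ v ∈ V, w v * evalDir y v < ∑ v ∈ V, w v * evalDir y (inDegVec σ) :=
          Finset.sum_lt_sum (fun v hv => mul_le_mul_of_nonneg_left (hVle v hv) (hw0 v hv))
            ⟨v0, hv0, mul_lt_mul_of_pos_left hlt hpos⟩
        have hsum : ∑ v ∈ V, w v * evalDir y (inDegVec σ) = evalDir y (inDegVec σ) := by
          rw [← Finset.sum_mul, hw1, one_mul]
        rw [evalDir_sum_smul] at heq
        rw [heq, hsum] at hstrict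
        exact lt_irrefl _ hstrict
      calc (∑ v ∈ V, w v • v) = ∑ v ∈ V, w v • inDegVec σ := by
            refine Finset.sum_congr rfl fun v hv => ?_
            by_cases h : w v = 0
            · rw [h, zero_smul, zero_smul]
            · rw [hall v hv h]
        _ = (∑ v ∈ V, w v) • inDegVec σ := by rw [Finset.sum_smul]
        _ = inDegVec σ := by rw [hw1, one_smul]
  rw [mem_extremePoints]
  refine ⟨heading_mem hh, ?_⟩
  intro x1 hx1 x2 hx2 hseg
  obtain ⟨t, s, ht, hs, hts, heq⟩ := hseg
  have h1 := hmax x1 hx1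
  have h2 := hmax x2 hx2
  have hM : t * evalDir y x1 + s * evalDir y x2 = evalDir y (inDegVec σ) := by
    rw [← evalDir_smul_add, heq]
  have hsplit : t * evalDir y (inDegVec σ) + s * evalDir y (inDegVec σ)
      = evalDir y (inDegVec σ) := by rw [← add_mul, hts, one_mul]
  have e1 : evalDir y x1 = evalDir y (inDegVec σ) := by
    refine le_antisymm h1.1 ?_
    by_contra hlt
    push_neg at hlt
    have h1' := mul_lt_mul_of_pos_left hlt ht
    have h2' := mul_le_mul_of_nonneg_left h2.1 hs.le
    linarith
  have e2 : evalDir y x2 = evalDir y (inDegVec σ) := by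
    refine le_antisymm h2.1 ?_
    by_contra hlt
    push_neg at hlt
    have h2' := mul_lt_mul_of_pos_left hlt hs
    have h1' := mul_le_mul_of_nonneg_left h1.1 ht.le
    linarith
  exact ⟨h1.2 e1, h2.2 e2⟩

end Extreme


/-- The hypergraphic polytope `P(h)` is the convex hull of the in-degree
vectors `δ(σ)` of the acyclic headings `σ` of `h`; moreover, for a heading `σ`, the point
`δ(σ)` is a vertex (extreme point) of `P(h)` if and only if `σ` is acyclic. -/
theorem stmt9 {I : Type*} [Fintype I] [DecidableEq I] {ι : Type*} [Fintype ι]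
    (edges : ι → Finset I) (hE : ∀ a, (edges a).Nonempty) :
    hgPolytope edges =
      convexHull ℝ {x : I → ℝ | ∃ σ : ι → I, IsAcyclicHeading edges σ ∧ x = inDegVec σ} ∧
    ∀ σ : ι → I, IsHeading edges σ →
      (inDegVec σ ∈ Set.extremePoints ℝ (hgPolytope edges) ↔ IsAcyclicHeading edges σ) := by
  classical
  have hpart2 : ∀ σ : ι → I, IsHeading edges σ →
      (inDegVec σ ∈ Set.extremePoints ℝ (hgPolytope edges) ↔ IsAcyclicHeading edges σ) := by
    intro σ hσ
    constructor
    · intro hext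
      exact ⟨hσ, fun hcyc => not_extreme hσ hcyc hext⟩
    · intro hac
      exact extreme_of_acyclic hE hac
  refine ⟨?_, hpart2⟩
  set A : Set (I → ℝ) := {x | ∃ σ : ι → I, IsAcyclicHeading edges σ ∧ x = inDegVec σ} with hA
  apply Set.Subset.antisymm
  · have hfin : (headingPoints edges).Finite := headingPoints_finite edges
    have hconv : hgPolytope edges = convexHull ℝ (headingPoints edges) :=
      hgPolytope_eq_convexHull edges hE
    have hcomp : IsCompact (hgPolytope edges) := by
      rw [hconv]; exact hfin.isCompact_convexHull (𝕜 := ℝ)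
    have hcvx : Convex ℝ (hgPolytope edges) := convex_hgPolytope edges
    have hext_sub : Set.extremePoints ℝ (hgPolytope edges) ⊆ A := by
      intro x hx
      have hx' := hx
      rw [hconv] at hx'
      have hxh : x ∈ headingPoints edges := extremePoints_convexHull_subset hx'
      obtain ⟨τ, hτ, rfl⟩ := hxh
      exact ⟨τ, ⟨hτ, fun hcyc => not_extreme hτ hcyc hx⟩, rfl⟩
    have hAfin : A.Finite := hfin.subset (by rintro x ⟨τ, hτ, rfl⟩; exact ⟨τ, hτ.1, rfl⟩)
    have hclosed : IsClosed (convexHull ℝ A) := hAfin.isClosed_convexHull (𝕜 := ℝ)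
    calc hgPolytope edges
        = closure (convexHull ℝ (Set.extremePoints ℝ (hgPolytope edges))) :=
          (closure_convexHull_extremePoints hcomp hcvx).symm
      _ ⊆ closure (convexHull ℝ A) := closure_mono (convexHull_mono hext_sub)
      _ = convexHull ℝ A := hclosed.closure_eq
  · apply convexHull_min
    · rintro x ⟨τ, hτ, rfl⟩
      exact heading_mem hτ.1
    · exact convex_hgPolytope edges
end
end

section
/- Let h = (I, E) be a hypergraph with |I| = d. Then the function χ_d(h)(m) counting the proper colorings of h with m colors agrees with a polynomial in m of degree d for all positive integers m. -/
open Set Pointwise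
open scoped Classical

noncomputable section

namespace Stmt10Aux

open Finset

/-- Transfer of properness along an order-preserving relabeling of colors. -/
lemma proper_congr {I : Type*} {ι : Type*} (edges : ι → Finset I) {c c' : I → ℕ}
    (h : ∀ i j, c i ≤ c j ↔ c' i ≤ c' j) (hp : IsProperColoring edges c) :
    IsProperColoring edges c' := by
  intro a
  obtain ⟨i, ⟨hi, hmax⟩, huniq⟩ := hp a
  refine ⟨i, ⟨hi, fun j hj => (h j i).mp (hmax j hj)⟩, ?_⟩
  rintro j ⟨hj, hmaxj⟩
  exact huniq j ⟨hj, fun k hk => (h k j).mpr (hmaxj k hk)⟩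

/-- An injective coloring is proper. -/
lemma inj_proper {I : Type*} {ι : Type*} (edges : ι → Finset I)
    (hE : ∀ a, (edges a).Nonempty) {c : I → ℕ}
    (hc : Function.Injective c) : IsProperColoring edges c := by
  intro a
  obtain ⟨i, hi, hmax⟩ := Finset.exists_max_image (edges a) c (hE a)
  refine ⟨i, ⟨hi, hmax⟩, ?_⟩
  rintro j ⟨hj, hmaxj⟩
  exact hc (le_antisymm (hmax j hj) (hmaxj i hi))

/-- The rank of `t` within the finite set `T`. -/
def rk (T : Finset ℕ) (t : ℕ) : ℕ := (T.filter (· ≤ t)).card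

lemma rk_mem {T : Finset ℕ} {t : ℕ} (ht : t ∈ T) : rk T t ∈ Finset.Icc 1 T.card := by
  rw [Finset.mem_Icc]
  constructor
  · have : t ∈ T.filter (· ≤ t) := Finset.mem_filter.mpr ⟨ht, le_refl t⟩
    exact Finset.card_pos.mpr ⟨t, this⟩
  · exact Finset.card_le_card (Finset.filter_subset _ _)

lemma rk_lt_of_lt {T : Finset ℕ} {s t : ℕ} (hs : s ∈ T) (h : t < s) :
    rk T t < rk T s := by
  apply Finset.card_lt_card
  rw [Finset.ssubset_iff_of_subset]
  · exact ⟨s, Finset.mem_filter.mpr ⟨hs, le_refl s⟩, fun hmem =>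
      absurd (Finset.mem_filter.mp hmem).2 (not_le.mpr h)⟩
  · intro x hx
    obtain ⟨hxT, hxt⟩ := Finset.mem_filter.mp hx
    exact Finset.mem_filter.mpr ⟨hxT, le_trans hxt h.le⟩

lemma rk_le_iff {T : Finset ℕ} {s t : ℕ} (hs : s ∈ T) (ht : t ∈ T) :
    s ≤ t ↔ rk T s ≤ rk T t := by
  constructor
  · intro h
    apply Finset.card_le_card
    intro x hx
    obtain ⟨hxT, hxs⟩ := Finset.mem_filter.mp hx
    exact Finset.mem_filter.mpr ⟨hxT, le_trans hxs h⟩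
  · intro h
    by_contra hlt
    exact absurd h (not_le.mpr (rk_lt_of_lt hs (not_le.mp hlt)))

lemma rk_injOn {T : Finset ℕ} : Set.InjOn (rk T) (T : Set ℕ) := by
  intro a ha b hb hab
  exact le_antisymm ((rk_le_iff ha hb).mpr hab.le) ((rk_le_iff hb ha).mpr hab.ge)

lemma rk_image {T : Finset ℕ} : T.image (rk T) = Finset.Icc 1 T.card := by
  apply Finset.eq_of_subset_of_card_le
  · intro x hx
    obtain ⟨t, ht, rfl⟩ := Finset.mem_image.mp hx
    exact rk_mem ht
  · rw [Finset.card_image_of_injOn rk_injOn, Nat.card_Icc]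
    omega

/-- The inverse of the rank function on `Icc 1 T.card`. -/
noncomputable def grk (T : Finset ℕ) (j : ℕ) : ℕ :=
  if h : ∃ t ∈ T, rk T t = j then h.choose else 0

lemma grk_mem {T : Finset ℕ} {j : ℕ} (hj : j ∈ Finset.Icc 1 T.card) :
    grk T j ∈ T ∧ rk T (grk T j) = j := by
  have hex : ∃ t ∈ T, rk T t = j := by
    have := rk_image (T := T)
    rw [← this] at hj
    simpa [Finset.mem_image] using hj
  rw [grk, dif_pos hex]
  exact ⟨hex.choose_spec.1, hex.choose_spec.2⟩

lemma grk_rk {T : Finset ℕ} {t : ℕ} (ht : t ∈ T) : grk T (rk T t) = t := by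
  obtain ⟨h1, h2⟩ := grk_mem (rk_mem ht)
  exact rk_injOn h1 ht h2

lemma grk_image {T : Finset ℕ} : (Finset.Icc 1 T.card).image (grk T) = T := by
  apply Finset.eq_of_subset_of_card_le
  · intro x hx
    obtain ⟨j, hj, rfl⟩ := Finset.mem_image.mp hx
    exact (grk_mem hj).1
  · rw [Finset.card_image_of_injOn, Nat.card_Icc]
    · omega
    intro a ha b hb hab
    rw [← (grk_mem ha).2, ← (grk_mem hb).2, hab]

end Stmt10Aux


namespace Stmt10Aux

open Finset

variable {I : Type*} [Fintype I] [DecidableEq I] {ι : Type*} [Fintype ι]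

/-- The finset of proper colorings with colors in `{1,…,m}`. -/
noncomputable def SF (edges : ι → Finset I) (m : ℕ) : Finset (I → ℕ) :=
  (Fintype.piFinset fun _ : I => Finset.Icc 1 m).filter fun c => IsProperColoring edges c

/-- The finset of proper colorings with image exactly `{1,…,k}`. -/
noncomputable def Bk (edges : ι → Finset I) (k : ℕ) : Finset (I → ℕ) :=
  (SF edges k).filter fun c => Finset.image c Finset.univ = Finset.Icc 1 k

lemma mem_SF {edges : ι → Finset I} {m : ℕ} {c : I → ℕ} :
    c ∈ SF edges m ↔ (∀ i, c i ∈ Finset.Icc 1 m) ∧ IsProperColoring edges c := by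
  simp [SF, Fintype.mem_piFinset]

lemma card_fiber (edges : ι → Finset I) {m : ℕ} {T : Finset ℕ}
    (hT : T ⊆ Finset.Icc 1 m) :
    ((SF edges m).filter fun c => Finset.image c Finset.univ = T).card
      = (Bk edges T.card).card := by
  apply Finset.card_bij' (fun c _ => rk T ∘ c) (fun c' _ => grk T ∘ c')
  · -- forward membership
    intro c hc
    obtain ⟨hcm, hIm⟩ := Finset.mem_filter.mp hc
    obtain ⟨hval, hprop⟩ := mem_SF.mp hcm
    have hcT : ∀ i, c i ∈ T := fun i => hIm ▸ Finset.mem_image_of_mem c (Finset.mem_univ i)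
    rw [Bk, Finset.mem_filter, mem_SF]
    refine ⟨⟨fun i => rk_mem (hcT i), ?_⟩, ?_⟩
    · exact proper_congr edges (fun i j => rk_le_iff (hcT i) (hcT j)) hprop
    · show Finset.univ.image (rk T ∘ c) = Finset.Icc 1 T.card
      rw [← Finset.image_image, hIm, rk_image]
  · -- backward membership
    intro c' hc'
    obtain ⟨hcm, hIm⟩ := Finset.mem_filter.mp hc'
    obtain ⟨hval, hprop⟩ := mem_SF.mp hcm
    have hcI : ∀ i, c' i ∈ Finset.Icc 1 T.card :=
      fun i => hIm ▸ Finset.mem_image_of_mem c' (Finset.mem_univ i)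
    rw [Finset.mem_filter, mem_SF]
    refine ⟨⟨fun i => hT (grk_mem (hcI i)).1, ?_⟩, ?_⟩
    · refine proper_congr edges (fun i j => ?_) hprop
      simp only [Function.comp_apply]
      rw [rk_le_iff (grk_mem (hcI i)).1 (grk_mem (hcI j)).1,
        (grk_mem (hcI i)).2, (grk_mem (hcI j)).2]
    · show Finset.univ.image (grk T ∘ c') = T
      rw [← Finset.image_image, hIm, grk_image]
  · -- left inverse
    intro c hc
    obtain ⟨hcm, hIm⟩ := Finset.mem_filter.mp hc
    have hcT : ∀ i, c i ∈ T := fun i => hIm ▸ Finset.mem_image_of_mem c (Finset.mem_univ i)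
    funext i
    exact grk_rk (hcT i)
  · -- right inverse
    intro c' hc'
    obtain ⟨hcm, hIm⟩ := Finset.mem_filter.mp hc'
    have hcI : ∀ i, c' i ∈ Finset.Icc 1 T.card :=
      fun i => hIm ▸ Finset.mem_image_of_mem c' (Finset.mem_univ i)
    funext i
    exact (grk_mem (hcI i)).2

lemma card_SF (edges : ι → Finset I) (m : ℕ) :
    (SF edges m).card = ∑ k ∈ Finset.range (m + 1), m.choose k * (Bk edges k).card := by
  have hpart : SF edges m = ((Finset.Icc 1 m).powerset).biUnion
      (fun T => (SF edges m).filter fun c => Finset.image c Finset.univ = T) := by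
    ext c
    simp only [Finset.mem_biUnion, Finset.mem_filter, Finset.mem_powerset]
    constructor
    · intro hc
      refine ⟨Finset.image c Finset.univ, ?_, hc, rfl⟩
      intro x hx
      obtain ⟨i, _, rfl⟩ := Finset.mem_image.mp hx
      exact (mem_SF.mp hc).1 i
    · rintro ⟨T, _, hc, _⟩
      exact hc
  rw [hpart, Finset.card_biUnion]
  · have : ∀ T ∈ (Finset.Icc 1 m).powerset,
        ((SF edges m).filter fun c => Finset.image c Finset.univ = T).card
          = (Bk edges T.card).card := by
      intro T hT
      exact card_fiber edges (Finset.mem_powerset.mp hT)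
    rw [Finset.sum_congr rfl this,
      Finset.sum_powerset_apply_card (fun k => (Bk edges k).card), Nat.card_Icc]
    simp [Nat.add_sub_cancel, mul_comm]
  · intro T _ T' _ hne
    apply Finset.disjoint_left.mpr
    intro c hc hc'
    exact hne ((Finset.mem_filter.mp hc).2 ▸ ((Finset.mem_filter.mp hc').2).symm ▸ rfl)

end Stmt10Aux


/-- For a hypergraph `h = (I, E)` with `|I| = d`, the number of proper
colorings of `h` with `m` colors agrees with a polynomial in `m` of degree `d` for all
positive integers `m`. -/
theorem stmt10 {I : Type*} [Fintype I] [DecidableEq I] {ι : Type*} [Fintype ι]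
    (edges : ι → Finset I) (hE : ∀ a, (edges a).Nonempty) (d : ℕ)
    (hd : Fintype.card I = d) :
    ∃ p : Polynomial ℝ, p.degree = (d : WithBot ℕ) ∧
      ∀ m : ℕ, 0 < m →
        p.eval (m : ℝ) =
          Set.ncard {c : I → ℕ | (∀ i, c i ∈ Finset.Icc 1 m) ∧ IsProperColoring edges c} := by
  classical
  set b : ℕ → ℕ := fun k => (Stmt10Aux.Bk edges k).card with hb
  have hb0 : ∀ k, d < k → b k = 0 := by
    intro k hk
    rw [hb]
    simp only []
    rw [Finset.card_eq_zero]
    apply Finset.eq_empty_of_forall_notMem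
    intro c hc
    have hIm := (Finset.mem_filter.mp hc).2
    have h1 : (Finset.image c Finset.univ).card ≤ d := by
      calc (Finset.image c Finset.univ).card ≤ (Finset.univ : Finset I).card :=
            Finset.card_image_le
        _ = d := by rw [Finset.card_univ, hd]
    rw [hIm, Nat.card_Icc] at h1
    omega
  have hbd : 0 < b d := by
    have e := Fintype.equivFinOfCardEq hd
    set c : I → ℕ := fun i => (e i : ℕ) + 1 with hc
    have hinj : Function.Injective c := by
      intro i j hij
      apply e.injective
      apply Fin.val_injective
      have : (e i : ℕ) + 1 = (e j : ℕ) + 1 := hij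
      omega
    have hmemIcc : ∀ i, c i ∈ Finset.Icc 1 d := fun i =>
      Finset.mem_Icc.mpr ⟨Nat.succ_le_succ (Nat.zero_le _), Nat.succ_le_of_lt (e i).isLt⟩
    have himg : Finset.image c Finset.univ = Finset.Icc 1 d := by
      apply Finset.eq_of_subset_of_card_le
      · intro x hx
        obtain ⟨i, _, rfl⟩ := Finset.mem_image.mp hx
        exact hmemIcc i
      · rw [Finset.card_image_of_injective _ hinj, Nat.card_Icc, Finset.card_univ, hd]
        omega
    apply Finset.card_pos.mpr
    exact ⟨c, Finset.mem_filter.mpr ⟨Stmt10Aux.mem_SF.mpr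
      ⟨hmemIcc, Stmt10Aux.inj_proper edges hE hinj⟩, himg⟩⟩
  have hsum : ∀ m : ℕ, (Stmt10Aux.SF edges m).card
      = ∑ k ∈ Finset.range (d + 1), m.choose k * b k := by
    intro m
    rw [Stmt10Aux.card_SF]
    set N := max m d with hN
    have h1 : ∑ k ∈ Finset.range (m+1), m.choose k * b k
        = ∑ k ∈ Finset.range (N+1), m.choose k * b k := by
      apply Finset.sum_subset
      · apply Finset.range_subset_range.mpr; omega
      · intro k hk1 hk2
        simp only [Finset.mem_range] at hk1 hk2
        rw [Nat.choose_eq_zero_of_lt (by omega), zero_mul]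
    have h2 : ∑ k ∈ Finset.range (d+1), m.choose k * b k
        = ∑ k ∈ Finset.range (N+1), m.choose k * b k := by
      apply Finset.sum_subset
      · apply Finset.range_subset_range.mpr; omega
      · intro k hk1 hk2
        simp only [Finset.mem_range] at hk1 hk2
        rw [hb0 k (by omega), mul_zero]
    rw [h1, ← h2]
  refine ⟨∑ k ∈ Finset.range (d + 1),
      Polynomial.C ((b k : ℝ) / (Nat.factorial k)) * descPochhammer ℝ k, ?_, ?_⟩
  · -- degree
    have hcoeff : (∑ k ∈ Finset.range (d + 1),
        Polynomial.C ((b k : ℝ) / (Nat.factorial k)) * descPochhammer ℝ k).coeff d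
          = (b d : ℝ) / (Nat.factorial d) := by
      rw [Polynomial.finset_sum_coeff]
      rw [Finset.sum_eq_single d]
      · rw [Polynomial.coeff_C_mul]
        have hq : (descPochhammer ℝ d).coeff d = 1 := by
          have hm := monic_descPochhammer ℝ d
          have := hm.coeff_natDegree
          rwa [descPochhammer_natDegree] at this
        rw [hq, mul_one]
      · intro k hk hne
        apply Polynomial.coeff_eq_zero_of_natDegree_lt
        calc (Polynomial.C ((b k : ℝ) / (Nat.factorial k)) * descPochhammer ℝ k).natDegree
            ≤ (Polynomial.C ((b k : ℝ) / (Nat.factorial k))).natDegree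
              + (descPochhammer ℝ k).natDegree := Polynomial.natDegree_mul_le
          _ = k := by rw [Polynomial.natDegree_C, descPochhammer_natDegree, zero_add]
          _ < d := by
              simp only [Finset.mem_range] at hk
              omega
      · intro hd'
        exact absurd (Finset.self_mem_range_succ d) hd'
    have hne : ((b d : ℝ) / (Nat.factorial d)) ≠ 0 := by
      apply div_ne_zero
      · exact_mod_cast hbd.ne'
      · exact_mod_cast (Nat.factorial_pos d).ne'
    apply Polynomial.degree_eq_of_le_of_coeff_ne_zero
    · refine le_trans (Polynomial.degree_sum_le _ _) (Finset.sup_le ?_)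
      intro k hk
      refine le_trans (Polynomial.degree_mul_le _ _) ?_
      have h1 : (Polynomial.C ((b k : ℝ) / (Nat.factorial k))).degree ≤ 0 :=
        Polynomial.degree_C_le
      have h2 : (descPochhammer ℝ k).degree = (k : WithBot ℕ) := by
        rw [Polynomial.degree_eq_natDegree (monic_descPochhammer ℝ k).ne_zero,
          descPochhammer_natDegree]
      rw [h2]
      calc (Polynomial.C ((b k : ℝ) / (Nat.factorial k))).degree + (k : WithBot ℕ)
          ≤ 0 + (k : WithBot ℕ) := by exact add_le_add h1 le_rfl
        _ = (k : WithBot ℕ) := by rw [zero_add]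
        _ ≤ (d : WithBot ℕ) := by
            simp only [Finset.mem_range] at hk
            exact_mod_cast Nat.lt_succ_iff.mp hk
    · rw [hcoeff]; exact hne
  · -- evaluation
    intro m hm
    have hset : {c : I → ℕ | (∀ i, c i ∈ Finset.Icc 1 m) ∧ IsProperColoring edges c}
        = ↑(Stmt10Aux.SF edges m) := by
      ext c
      simp [Stmt10Aux.mem_SF]
    rw [hset, Set.ncard_coe_finset, hsum m, Polynomial.eval_finset_sum]
    push_cast
    apply Finset.sum_congr rfl
    intro k hk
    rw [Polynomial.eval_mul, Polynomial.eval_C, descPochhammer_eval_eq_descFactorial,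
      Nat.descFactorial_eq_factorial_mul_choose]
    push_cast
    have hkf : (Nat.factorial k : ℝ) ≠ 0 := by
      exact_mod_cast (Nat.factorial_pos k).ne'
    field_simp
end
end
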